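/- arXiv:2506.07609 — 8 statements merged into one kernel-verified Lean document; each statement's English description precedes it below -/
import Mathlib

section
/- Let t ≥ 1 be an integer, and let x, z ∈ Σ_q^n be sequences of length n such that D_t(x) ∩ D_t(z) ≠ ∅. If y ∈ Σ_q^n is obtained from z by a substitution at a single position p_y ∈ [1, n], then x and y can be partitioned into x = x^(1) x^(2) and y = y^(1) y^(2) (consecutive substrings) such that for each i ∈ {1, 2}, |x^(i)| = |y^(i)| and D_t(x^(i)) ∩ D_t(y^(i)) ≠ ∅. -/
open Finset

/-- `y` is obtained from `x` by exactly `t` deletions. -/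
def delBall (t : ℕ) (x : List ℕ) : Set (List ℕ) :=
  {y | y.Sublist x ∧ y.length + t = x.length}

/-- `z` is obtained from `y` by `s` substitutions over the alphabet `{0, …, q-1}`
(trivial substitutions are allowed, so this is Hamming distance at most `s`). -/
def subBall (q s : ℕ) (y : List ℕ) : Set (List ℕ) :=
  {z | z.length = y.length ∧ (∀ a ∈ z, a < q) ∧
    (y.zip z).countP (fun p => p.1 != p.2) ≤ s}

/-- The `t`-deletion `s`-substitution ball `B_{t,s}(x)` over the alphabet `{0, …, q-1}`. -/
def ball (q t s : ℕ) (x : List ℕ) : Set (List ℕ) :=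
  {z | ∃ y ∈ delBall t x, z ∈ subBall q s y}

/-- The `≤ t`-burst-deletion ball `D_t(x)`: delete a substring of length at most `t`. -/
def burstBall (t : ℕ) (x : List ℕ) : Set (List ℕ) :=
  {y | ∃ i t', t' ≤ t ∧ y = x.take i ++ x.drop (i + t')}

/-- All nonzero entries of `z` share the same sign. -/
def sameSign (z : List ℤ) : Prop := (∀ a ∈ z, 0 ≤ a) ∨ (∀ a ∈ z, a ≤ 0)

/-- The sign-preserving number `σ(z)`: the smallest positive `k` such that `z` can be
partitioned into `k` consecutive substrings, each with all nonzero entries of the same sign. -/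
noncomputable def sigmaNum (z : List ℤ) : ℕ :=
  sInf {k | 0 < k ∧ ∃ parts : List (List ℤ),
    parts.length = k ∧ parts.flatten = z ∧ ∀ p ∈ parts, sameSign p}

/-- The `k`-th order VT syndrome `VT^k(z) = ∑_{i=1}^n i^k z_i`. -/
def VT (k : ℕ) (z : List ℤ) : ℤ :=
  ∑ i ∈ Finset.range z.length, ((i : ℤ) + 1) ^ k * z.getD i 0

/-- The accumulative sequence `f(x)`, with `f(x)_i = ∑_{j=1}^i x_j`. -/
def facc (x : List ℕ) : List ℤ :=
  (List.range x.length).map (fun i => ∑ j ∈ Finset.range (i + 1), (x.getD j 0 : ℤ))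

/-- The differential sequence `d(x)`, with `d(x)_i = x_i - x_{i-1} (mod q)` and `x_0 = 0`. -/
def diffSeq (q : ℕ) (x : List ℕ) : List ℤ :=
  (List.range x.length).map (fun i =>
    ((x.getD i 0 : ℤ) - (if i = 0 then 0 else (x.getD (i - 1) 0 : ℤ))) % (q : ℤ))

/-- The accumulative differential sequence `g(x)`, with `g(x)_i = ∑_{j=1}^i d(x)_j`. -/
def gacc (q : ℕ) (x : List ℕ) : List ℤ :=
  (List.range x.length).map (fun i => ∑ j ∈ Finset.range (i + 1), (diffSeq q x).getD j 0)

/-- A binary sequence is `t`-good if any two ones are at distance at least `t`. -/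
def tGood (t : ℕ) (x : List ℕ) : Prop :=
  ∀ i j, i < j → j < x.length → x.getD i 0 = 1 → x.getD j 0 = 1 → t ≤ j - i

/-- A sequence is `t`-valid if any two nonzero entries are at distance at least `t + 1`. -/
def tValid (t : ℕ) (x : List ℕ) : Prop :=
  ∀ i j, i < j → j < x.length → x.getD i 0 ≠ 0 → x.getD j 0 ≠ 0 → t + 1 ≤ j - i

lemma gtake (l : List ℕ) (n k : ℕ) : (l.take n)[k]? = if k < n then l[k]? else none := by
  split
  · exact List.getElem?_take_of_lt ‹_›
  · exact List.getElem?_eq_none (by simp only [List.length_take]; omega)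

lemma delE (x : List ℕ) (i c k : ℕ) (hi : i ≤ x.length) :
    (x.take i ++ x.drop (i + c))[k]? = if k < i then x[k]? else x[k + c]? := by
  rw [List.getElem?_append]
  simp only [List.length_take, min_eq_left hi]
  split
  · exact List.getElem?_take_of_lt ‹_›
  · rw [List.getElem?_drop]; congr 1; omega

lemma norm (x : List ℕ) (i c : ℕ) :
    x.take i ++ x.drop (i + c) =
      x.take (min i x.length) ++
        x.drop (min i x.length + min c (x.length - min i x.length)) := by
  rcases le_or_gt i x.length with h | h
  · rw [min_eq_left h]
    rcases le_or_gt c (x.length - i) with h2 | h2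
    · rw [min_eq_left h2]
    · rw [min_eq_right h2.le, List.drop_eq_nil_of_le (by omega),
        List.drop_eq_nil_of_le (by omega)]
  · rw [min_eq_right h.le, List.take_of_length_le h.le, List.take_length,
      List.drop_eq_nil_of_le (by omega), List.drop_eq_nil_of_le (by omega)]

lemma del_eq_del {u v : List ℕ} {a c a' c' : ℕ} (ha : a ≤ u.length) (ha' : a' ≤ v.length)
    (h : ∀ k, (if k < a then u[k]? else u[k + c]?) = (if k < a' then v[k]? else v[k + c']?)) :
    u.take a ++ u.drop (a + c) = v.take a' ++ v.drop (a' + c') :=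
  List.ext_getElem? fun k => by rw [delE u a c k ha, delE v a' c' k ha']; exact h k

lemma key {t : ℕ} {u v : List ℕ} (a c a' c' : ℕ) (hc : c ≤ t) (hc' : c' ≤ t)
    (ha : a ≤ u.length) (ha' : a' ≤ v.length)
    (h : ∀ k, (if k < a then u[k]? else u[k + c]?) = (if k < a' then v[k]? else v[k + c']?)) :
    (burstBall t u ∩ burstBall t v).Nonempty :=
  ⟨u.take a ++ u.drop (a + c), ⟨a, c, hc, rfl⟩, ⟨a', c', hc', del_eq_del ha ha' h⟩⟩


set_option maxHeartbeats 4000000 in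
/-- Lemma 2. If the `≤t`-burst-deletion balls of `x, z ∈ Σ_q^n` intersect
and `y` is obtained from `z` by one substitution at position `p_y ∈ [1, n]`, then `x` and `y`
can be partitioned into two consecutive substrings of matching lengths whose
`≤t`-burst-deletion balls intersect. -/
theorem stmt2 (q n t : ℕ) (hq : 2 ≤ q) (ht : 1 ≤ t)
    (x z y : List ℕ) (hxn : x.length = n) (hzn : z.length = n)
    (hxq : ∀ a ∈ x, a < q) (hzq : ∀ a ∈ z, a < q)
    (hD : (burstBall t x ∩ burstBall t z).Nonempty)
    (py : ℕ) (hpy1 : 1 ≤ py) (hpyn : py ≤ n)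
    (b : ℕ) (hb : b < q) (hy : y = z.set (py - 1) b) :
    ∃ x1 x2 y1 y2 : List ℕ,
      x = x1 ++ x2 ∧ y = y1 ++ y2 ∧
      x1.length = y1.length ∧ x2.length = y2.length ∧
      (burstBall t x1 ∩ burstBall t y1).Nonempty ∧
      (burstBall t x2 ∩ burstBall t y2).Nonempty := by
  have hyn : y.length = n := by rw [hy, List.length_set, hzn]
  obtain ⟨w, ⟨i1, c1, hc1, hw1⟩, ⟨j1, c2, hc2, hw2⟩⟩ := hD
  rw [norm] at hw1 hw2
  set i := min i1 x.length with hi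
  set c := min c1 (x.length - i) with hc
  set j := min j1 z.length with hj
  set d := min c2 (z.length - j) with hd
  have hct : c ≤ t := by omega
  have hin : i + c ≤ n := by omega
  have hjdn : j + d ≤ n := by omega
  have hlen : c = d := by
    have h1 := congrArg List.length hw1
    have h2 := congrArg List.length hw2
    simp only [List.length_append, List.length_take, List.length_drop] at h1 h2
    omega
  rw [← hlen] at hw2
  have hjn : j + c ≤ n := by omega
  have hK : ∀ k, (if k < i then x[k]? else x[k + c]?)
      = (if k < j then z[k]? else z[k + c]?) := by
    intro k
    have e := congrArg (fun l => l[k]?) (hw1.symm.trans hw2)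
    rwa [delE x i c k (by omega), delE z j c k (by omega)] at e
  set P := py - 1 with hP
  have hPn : P < n := by omega
  have hky : ∀ e, y[e]? = if P = e then some b else z[e]? := by
    intro e
    rw [hy, List.getElem?_set]
    by_cases h : P = e
    · rw [if_pos h, if_pos (by omega), if_pos h]
    · rw [if_neg h, if_neg h]
  have hsuf : ∀ e, i + c ≤ e → j + c ≤ e → x[e]? = z[e]? := by
    intro e h1 h2
    have h3 := hK (e - c)
    rw [if_neg (by omega), if_neg (by omega), show e - c + c = e from by omega] at h3
    exact h3
  rcases Nat.eq_zero_or_pos c with hc0 | hc0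
  · -- c = 0 : x and z coincide pointwise
    have hxz : ∀ e : ℕ, x[e]? = z[e]? := by
      intro e
      have h3 := hK e
      rw [hc0] at h3
      simpa using h3
    refine ⟨x.take (P+1), x.drop (P+1), y.take (P+1), y.drop (P+1),
      (List.take_append_drop _ _).symm, (List.take_append_drop _ _).symm,
      by simp only [List.length_take, hxn, hyn],
      by simp only [List.length_drop, hxn, hyn],
      key P 1 P 1 ht ht (by simp only [List.length_take]; omega)
        (by simp only [List.length_take]; omega) ?_,
      key 0 0 0 0 (by omega) (by omega) (by omega) (by omega) ?_⟩
    · intro k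
      simp only [gtake, hky, ← Nat.add_assoc]
      split_ifs <;>
        first
          | rfl
          | exact hxz _
          | (exfalso; omega)
          | (exact List.getElem?_eq_none (by omega))
          | (exact (List.getElem?_eq_none (by omega)).symm)
    · intro k
      simp only [List.getElem?_drop, hky, Nat.add_zero, ← Nat.add_assoc]
      split_ifs <;>
        first
          | rfl
          | exact hxz _
          | (exfalso; omega)
  · -- c ≥ 1
    rcases lt_or_ge P j with hPj | hPj
    · rcases lt_or_ge P i with hPi | hPi
      · -- Case B : P < i, P < j ; split at P+1
        refine ⟨x.take (P+1), x.drop (P+1), y.take (P+1), y.drop (P+1),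
          (List.take_append_drop _ _).symm, (List.take_append_drop _ _).symm,
          by simp only [List.length_take, hxn, hyn],
          by simp only [List.length_drop, hxn, hyn],
          key P 1 P 1 ht ht (by simp only [List.length_take]; omega)
            (by simp only [List.length_take]; omega) ?_,
          key (i-(P+1)) c (j-(P+1)) c hct hct
            (by simp only [List.length_drop]; omega)
            (by simp only [List.length_drop]; omega) ?_⟩
        · intro k
          have hk := hK k
          simp only [gtake, hky, ← Nat.add_assoc] at hk ⊢
          split_ifs at hk ⊢ <;>
            first
              | rfl
              | exact hk
              | (exfalso; omega)
              | (exact List.getElem?_eq_none (by omega))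
              | (exact (List.getElem?_eq_none (by omega)).symm)
        · intro k
          have hk := hK (P+1+k)
          simp only [List.getElem?_drop, hky, ← Nat.add_assoc] at hk ⊢
          split_ifs at hk ⊢ <;>
            first
              | rfl
              | exact hk
              | (exfalso; omega)
      · -- Case D : i ≤ P < j ; split at P+1
        rcases le_or_gt (i + c) (P + 1) with hD1 | hD2
        · refine ⟨x.take (P+1), x.drop (P+1), y.take (P+1), y.drop (P+1),
            (List.take_append_drop _ _).symm, (List.take_append_drop _ _).symm,
            by simp only [List.length_take, hxn, hyn],
            by simp only [List.length_drop, hxn, hyn],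
            key i c (P+1-c) c hct hct (by simp only [List.length_take]; omega)
              (by simp only [List.length_take]; omega) ?_,
            key 0 c (j-(P+1)) c hct hct (by omega)
              (by simp only [List.length_drop]; omega) ?_⟩
          · intro k
            have hk := hK k
            simp only [gtake, hky, ← Nat.add_assoc] at hk ⊢
            split_ifs at hk ⊢ <;>
              first
                | rfl
                | exact hk
                | (exfalso; omega)
                | (exact List.getElem?_eq_none (by omega))
                | (exact (List.getElem?_eq_none (by omega)).symm)
          · intro k
            have hk := hK (P+1+k)
            simp only [List.getElem?_drop, hky, ← Nat.add_assoc] at hk ⊢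
            split_ifs at hk ⊢ <;>
              first
                | rfl
                | exact hk
                | (exfalso; omega)
        · refine ⟨x.take (P+1), x.drop (P+1), y.take (P+1), y.drop (P+1),
            (List.take_append_drop _ _).symm, (List.take_append_drop _ _).symm,
            by simp only [List.length_take, hxn, hyn],
            by simp only [List.length_drop, hxn, hyn],
            key i (P+1-i) i (P+1-i) (by omega) (by omega)
              (by simp only [List.length_take]; omega)
              (by simp only [List.length_take]; omega) ?_,
            key 0 c (j-(P+1)) c hct hct (by omega)
              (by simp only [List.length_drop]; omega) ?_⟩
          · intro k
            have hk := hK k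
            simp only [gtake, hky, ← Nat.add_assoc] at hk ⊢
            split_ifs at hk ⊢ <;>
              first
                | rfl
                | exact hk
                | (exfalso; omega)
                | (exact List.getElem?_eq_none (by omega))
                | (exact (List.getElem?_eq_none (by omega)).symm)
          · intro k
            have hk := hK (P+1+k)
            simp only [List.getElem?_drop, hky, ← Nat.add_assoc] at hk ⊢
            split_ifs at hk ⊢ <;>
              first
                | rfl
                | exact hk
                | (exfalso; omega)
    · rcases lt_or_ge P (j + c) with hPjc | hPjc
      · -- Case A : j ≤ P < j + c ; trivial split at n
        refine ⟨x.take n, x.drop n, y.take n, y.drop n,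
          (List.take_append_drop _ _).symm, (List.take_append_drop _ _).symm,
          by simp only [List.length_take, hxn, hyn],
          by simp only [List.length_drop, hxn, hyn],
          key i c j c hct hct (by simp only [List.length_take]; omega)
            (by simp only [List.length_take]; omega) ?_,
          key 0 0 0 0 (by omega) (by omega) (by omega) (by omega) ?_⟩
        · intro k
          have hk := hK k
          simp only [gtake, hky, ← Nat.add_assoc] at hk ⊢
          split_ifs at hk ⊢ <;>
            first
              | rfl
              | exact hk
              | (exfalso; omega)
              | (exact List.getElem?_eq_none (by omega))
              | (exact (List.getElem?_eq_none (by omega)).symm)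
        · intro k
          simp only [List.getElem?_drop, hky, Nat.add_zero, ← Nat.add_assoc]
          split_ifs <;>
            first
              | rfl
              | (exfalso; omega)
              | (rw [List.getElem?_eq_none (by omega), List.getElem?_eq_none (by omega)])
      · rcases le_or_gt (i + c) P with hPic | hPic
        · -- Case C : i + c ≤ P, j + c ≤ P ; split at P
          refine ⟨x.take P, x.drop P, y.take P, y.drop P,
            (List.take_append_drop _ _).symm, (List.take_append_drop _ _).symm,
            by simp only [List.length_take, hxn, hyn],
            by simp only [List.length_drop, hxn, hyn],
            key i c j c hct hct (by simp only [List.length_take]; omega)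
              (by simp only [List.length_take]; omega) ?_,
            key 0 1 0 1 ht ht (by omega) (by omega) ?_⟩
          · intro k
            have hk := hK k
            simp only [gtake, hky, ← Nat.add_assoc] at hk ⊢
            split_ifs at hk ⊢ <;>
              first
                | rfl
                | exact hk
                | (exfalso; omega)
                | (exact List.getElem?_eq_none (by omega))
                | (exact (List.getElem?_eq_none (by omega)).symm)
          · intro k
            simp only [List.getElem?_drop, hky, ← Nat.add_assoc]
            split_ifs <;>
              first
                | (exfalso; omega)
                | (exact hsuf _ (by omega) (by omega))
        · -- Case E : j + c ≤ P < i + c ; split at P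
          refine ⟨x.take P, x.drop P, y.take P, y.drop P,
            (List.take_append_drop _ _).symm, (List.take_append_drop _ _).symm,
            by simp only [List.length_take, hxn, hyn],
            by simp only [List.length_drop, hxn, hyn],
            key (P-c) c j c hct hct (by simp only [List.length_take]; omega)
              (by simp only [List.length_take]; omega) ?_,
            key (i-P) c 0 c hct hct (by simp only [List.length_drop]; omega)
              (by omega) ?_⟩
          · intro k
            have hk := hK k
            simp only [gtake, hky, ← Nat.add_assoc] at hk ⊢
            split_ifs at hk ⊢ <;>
              first
                | rfl
                | exact hk
                | (exfalso; omega)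
                | (exact List.getElem?_eq_none (by omega))
                | (exact (List.getElem?_eq_none (by omega)).symm)
          · intro k
            have hk := hK (P+k)
            simp only [List.getElem?_drop, hky, ← Nat.add_assoc] at hk ⊢
            split_ifs at hk ⊢ <;>
              first
                | rfl
                | exact hk
                | (exfalso; omega)
end

section
/- Let z ∈ Z^n be an integer sequence such that VT^k(z) = 0 for every k ∈ [0, σ(z) − 1]. Then z is the all-zero sequence 0^n. -/
open Finset

lemma sum_len (L : List (List ℤ)) :
    ∑ j ∈ range L.length, (L.getD j []).length = L.flatten.length := by
  induction L with
  | nil => simp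
  | cons p t ih =>
      simp only [List.length_cons, Finset.sum_range_succ', List.flatten_cons,
        List.length_append]
      simp only [List.getD_cons_succ, List.getD_cons_zero, ih]
      ring

lemma flatten_getD (L : List (List ℤ)) (j r : ℕ)
    (hr : r < (L.getD j []).length) :
    L.flatten.getD ((∑ j' ∈ range j, (L.getD j' []).length) + r) 0
      = (L.getD j []).getD r 0 := by
  induction j generalizing L with
  | zero =>
      cases L with
      | nil => simp at hr
      | cons p t =>
          simp only [List.getD_cons_zero] at hr ⊢
          simp only [List.flatten_cons, range_zero, Finset.sum_empty, Nat.zero_add]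
          rw [List.getD_append _ _ _ _ hr]
  | succ j ih =>
      cases L with
      | nil => simp at hr
      | cons p t =>
          simp only [List.getD_cons_succ] at hr ⊢
          simp only [List.flatten_cons, Finset.sum_range_succ', List.getD_cons_succ,
            List.getD_cons_zero]
          have : (∑ x ∈ range j, (t.getD x []).length) + p.length + r
              = p.length + ((∑ x ∈ range j, (t.getD x []).length) + r) := by ring
          rw [this, List.getD_append_right _ _ _ _ (Nat.le_add_right _ _)]
          simp only [Nat.add_sub_cancel_left]
          exact ih t hr

lemma merge_lemma (parts : List (List ℤ)) (j : ℕ) (hj : j + 1 < parts.length)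
    (hall : ∀ p ∈ parts, sameSign p)
    (hs : sameSign (parts.getD j [] ++ parts.getD (j+1) [])) :
    ∃ parts' : List (List ℤ), parts'.length + 1 = parts.length ∧
      parts'.flatten = parts.flatten ∧ ∀ p ∈ parts', sameSign p := by
  refine ⟨parts.take j ++ (parts.getD j [] ++ parts.getD (j+1) []) :: parts.drop (j+2),
    ?_, ?_, ?_⟩
  · simp only [List.length_append, List.length_take, List.length_cons, List.length_drop]
    omega
  · have h1 : parts.drop j = parts.getD j [] :: parts.drop (j+1) := by
      rw [List.getD_eq_getElem _ _ (by omega), List.drop_eq_getElem_cons]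
    have h2 : parts.drop (j+1) = parts.getD (j+1) [] :: parts.drop (j+2) := by
      rw [List.getD_eq_getElem _ _ (by omega), List.drop_eq_getElem_cons]
    conv_rhs => rw [← List.take_append_drop j parts, h1, h2]
    simp [List.flatten_append]
  · intro p hp
    rcases List.mem_append.1 hp with hp | hp
    · exact hall p (List.mem_of_mem_take hp)
    · rcases List.mem_cons.1 hp with rfl | hp
      · exact hs
      · exact hall p (List.mem_of_mem_drop hp)

lemma alt_lemma (p q : List ℤ) (hp : sameSign p) (hq : sameSign q)
    (hn : ¬ sameSign (p ++ q)) :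
    ((∀ a ∈ p, 0 ≤ a) ∧ (∃ x ∈ p, 0 < x) ∧ (∀ a ∈ q, a ≤ 0)) ∨
    ((∀ a ∈ p, a ≤ 0) ∧ (∃ x ∈ p, x < 0) ∧ (∀ a ∈ q, 0 ≤ a)) := by
  unfold sameSign at hn
  push_neg at hn
  obtain ⟨⟨aneg, hanegm, haneg⟩, bpos, hbposm, hbpos⟩ := hn
  rcases hp with hp | hp
  · left
    have hqneg : ∀ a ∈ q, a ≤ 0 := by
      have : aneg ∈ q := by
        rcases List.mem_append.1 hanegm with h | h
        · exact absurd (hp _ h) (by linarith)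
        · exact h
      rcases hq with hq | hq
      · exact absurd (hq _ this) (by linarith)
      · exact hq
    refine ⟨hp, ⟨bpos, ?_, hbpos⟩, hqneg⟩
    rcases List.mem_append.1 hbposm with h | h
    · exact h
    · exact absurd (hqneg _ h) (by linarith)
  · right
    have hqpos : ∀ a ∈ q, 0 ≤ a := by
      have : bpos ∈ q := by
        rcases List.mem_append.1 hbposm with h | h
        · exact absurd (hp _ h) (by linarith)
        · exact h
      rcases hq with hq | hq
      · exact hq
      · exact absurd (hq _ this) (by linarith)
    refine ⟨hp, ⟨aneg, ?_, haneg⟩, hqpos⟩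
    rcases List.mem_append.1 hanegm with h | h
    · exact h
    · exact absurd (hqpos _ h) (by linarith)

lemma prod_sign (N j : ℕ) (f : ℕ → ℤ) (hj : j ≤ N)
    (h1 : ∀ j' < j, 0 < f j') (h2 : ∀ j', j ≤ j' → j' < N → f j' < 0) :
    0 < (-1:ℤ)^(N - j) * ∏ j' ∈ range N, f j' := by
  rw [← Finset.prod_range_mul_prod_Ico f hj]
  have hA : 0 < ∏ j' ∈ range j, f j' :=
    Finset.prod_pos (fun x hx => h1 x (mem_range.1 hx))
  have hB : 0 < ∏ j' ∈ Ico j N, (-f j') :=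
    Finset.prod_pos (fun x hx => by
      have := h2 x (mem_Ico.1 hx).1 (mem_Ico.1 hx).2; linarith)
  have hneg : ∏ j' ∈ Ico j N, (-f j') = (-1:ℤ)^(N-j) * ∏ j' ∈ Ico j N, f j' := by
    have : ∀ j' ∈ Ico j N, -f j' = (-1) * f j' := by intros; ring
    rw [Finset.prod_congr rfl this, Finset.prod_mul_distrib, Finset.prod_const,
      Nat.card_Ico]
  have heq : (-1:ℤ)^(N-j) * ((∏ j' ∈ range j, f j') * ∏ j' ∈ Ico j N, f j')
      = (∏ j' ∈ range j, f j') * ∏ j' ∈ Ico j N, (-f j') := by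
    rw [hneg]; ring
  rw [heq]
  exact mul_pos hA hB

lemma flatten_map_singleton (z : List ℤ) : (z.map (fun a => [a])).flatten = z := by
  induction z with
  | nil => simp
  | cons a t ih => simp [ih]

/-- Lemma 4. If `VT^k(z) = 0` for every `k ∈ [0, σ(z) - 1]`,
then `z` is the all-zero sequence. -/
theorem stmt4 (n : ℕ) (z : List ℤ) (hz : z.length = n)
    (h : ∀ k < sigmaNum z, VT k z = 0) :
    z = List.replicate n 0 := by
  classical
  subst hz
  set S := {k | 0 < k ∧ ∃ parts : List (List ℤ),
    parts.length = k ∧ parts.flatten = z ∧ ∀ p ∈ parts, sameSign p} with hS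
  have hSne : S.Nonempty := by
    by_cases hzn : z = []
    · exact ⟨1, one_pos, [[]], by simp, by simp [hzn], by
        intro p hp; simp at hp; subst hp; left; simp⟩
    · refine ⟨z.length, List.length_pos_iff.2 hzn, z.map (fun a => [a]), by simp,
        flatten_map_singleton z, ?_⟩
      intro p hp
      simp only [List.mem_map] at hp
      obtain ⟨a, _, rfl⟩ := hp
      rcases le_total 0 a with ha | ha
      · left; intro x hx; simp at hx; omega
      · right; intro x hx; simp at hx; omega
  have hmS : sigmaNum z ∈ S := by
    have : sigmaNum z = sInf S := rfl
    rw [this]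
    exact Nat.sInf_mem hSne
  set m := sigmaNum z with hm
  obtain ⟨hmpos, parts, hlen, hflat, hsame⟩ := hmS
  -- block boundary positions
  set b : ℕ → ℕ := fun j => ∑ j' ∈ range j, (parts.getD j' []).length with hbdef
  have hbsucc : ∀ j, b (j+1) = b j + (parts.getD j []).length := by
    intro j; simp [hbdef, Finset.sum_range_succ]
  have hbmono : Monotone b := fun x y hxy =>
    Finset.sum_le_sum_of_subset (Finset.range_subset_range.2 hxy)
  have hbm : b m = z.length := by
    rw [hbdef]
    simp only
    rw [← hlen, sum_len, hflat]
  -- non-mergeability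
  have hnomerge : ∀ j, j + 1 < m →
      ¬ sameSign (parts.getD j [] ++ parts.getD (j+1) []) := by
    intro j hj hcontra
    obtain ⟨parts', hlen', hflat', hsame'⟩ :=
      merge_lemma parts j (by omega) hsame hcontra
    have hmem : (m - 1) ∈ S := by
      refine ⟨by omega, parts', by omega, by rw [hflat', hflat], hsame'⟩
    have h2 : m ≤ m - 1 := Nat.sInf_le hmem
    omega
  -- alternating sign constant
  have hsign : ∃ e : ℤ, (e = 1 ∨ e = -1) ∧
      ∀ j < m, ∀ a ∈ parts.getD j [], 0 ≤ e * (-1:ℤ)^j * a := by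
    have h0 : sameSign (parts.getD 0 []) ∨ parts.getD 0 [] = [] := by
      by_cases h00 : 0 < parts.length
      · left
        exact hsame _ (List.getD_eq_getElem parts [] h00 ▸ List.getElem_mem h00)
      · right
        rw [List.getD_eq_default]
        omega
    have hPmem : ∀ j < m, sameSign (parts.getD j []) := by
      intro j hj
      have hjl : j < parts.length := by omega
      exact hsame _ (List.getD_eq_getElem parts [] hjl ▸ List.getElem_mem hjl)
    set e : ℤ := if (∀ a ∈ parts.getD 0 [], 0 ≤ a) then 1 else -1 with hedef
    have he : e = 1 ∨ e = -1 := by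
      rw [hedef]; split_ifs <;> simp
    refine ⟨e, he, ?_⟩
    intro j
    induction j with
    | zero =>
        intro h0m a ha
        by_cases hcond : ∀ a ∈ parts.getD 0 [], 0 ≤ a
        · have he1 : e = 1 := by rw [hedef, if_pos hcond]
          have := hcond a ha
          rw [he1]; simpa using this
        · have he1 : e = -1 := by rw [hedef, if_neg hcond]
          have hle : ∀ a ∈ parts.getD 0 [], a ≤ 0 := by
            rcases hPmem 0 h0m with hc | hc
            · exact absurd hc hcond
            · exact hc
          have := hle a ha
          rw [he1]; simp; linarith
    | succ j ih =>
        intro hj1 a ha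
        have hepow : e * (-1:ℤ)^j = 1 ∨ e * (-1:ℤ)^j = -1 := by
          rcases he with he | he <;> rcases neg_one_pow_eq_or ℤ j with hp | hp <;>
            rw [he, hp] <;> norm_num
        rcases alt_lemma (parts.getD j []) (parts.getD (j+1) [])
            (hPmem j (by omega)) (hPmem (j+1) hj1) (hnomerge j hj1) with
          ⟨hge, ⟨x, hxm, hx⟩, hle⟩ | ⟨hle', ⟨x, hxm, hx⟩, hge'⟩
        · have h1 : e * (-1:ℤ)^j = 1 := by
            rcases hepow with h' | h'
            · exact h'
            · exfalso
              have := ih (by omega) x hxm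
              rw [h'] at this
              linarith
          have hq : e * (-1:ℤ)^(j+1) = -1 := by
            rw [pow_succ, ← mul_assoc, h1]; ring
          rw [hq]
          have := hle a ha
          linarith
        · have h1 : e * (-1:ℤ)^j = -1 := by
            rcases hepow with h' | h'
            · exfalso
              have := ih (by omega) x hxm
              rw [h'] at this
              linarith
            · exact h'
          have hq : e * (-1:ℤ)^(j+1) = 1 := by
            rw [pow_succ, ← mul_assoc, h1]; ring
          rw [hq]
          have := hge' a ha
          linarith
  obtain ⟨e, he, hesign⟩ := hsign
  set Q : Polynomial ℤ := ∏ j' ∈ range (m-1),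
      (Polynomial.C 2 * Polynomial.X - Polynomial.C (2*(b (j'+1) : ℤ) + 1)) with hQdef
  have hdeg : Q.natDegree < m := by
    have hfac : ∀ j' ∈ range (m-1),
        (Polynomial.C 2 * Polynomial.X - Polynomial.C (2*(b (j'+1):ℤ)+1)).natDegree ≤ 1 := by
      intro j' _
      have hrw : Polynomial.C (2:ℤ) * Polynomial.X - Polynomial.C (2*(b (j'+1):ℤ)+1)
          = Polynomial.C (2:ℤ) * Polynomial.X + Polynomial.C (-(2*(b (j'+1):ℤ)+1)) := by
        rw [Polynomial.C_neg]; ring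
      rw [hrw]
      exact Polynomial.natDegree_linear_le
    have h1 : Q.natDegree ≤ ∑ j' ∈ range (m-1), 1 :=
      le_trans (Polynomial.natDegree_prod_le _ _) (Finset.sum_le_sum hfac)
    simp only [Finset.sum_const, smul_eq_mul, mul_one, Finset.card_range] at h1
    omega
  have hQeval : ∀ x : ℤ, Q.eval x
      = ∏ j' ∈ range (m-1), (2*x - (2*(b (j'+1):ℤ)+1)) := by
    intro x; simp [hQdef, Polynomial.eval_prod]
  have hsum : ∑ i ∈ range z.length, Q.eval ((i:ℤ)+1) * z.getD i 0 = 0 := by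
    have hev : ∀ i : ℕ, Q.eval ((i:ℤ)+1)
        = ∑ k ∈ range (Q.natDegree+1), Q.coeff k * ((i:ℤ)+1)^k := fun i =>
      Polynomial.eval_eq_sum_range _
    calc ∑ i ∈ range z.length, Q.eval ((i:ℤ)+1) * z.getD i 0
        = ∑ i ∈ range z.length, ∑ k ∈ range (Q.natDegree+1),
            Q.coeff k * (((i:ℤ)+1)^k * z.getD i 0) := by
          refine Finset.sum_congr rfl fun i _ => ?_
          rw [hev i, Finset.sum_mul]
          exact Finset.sum_congr rfl fun k _ => by ring
      _ = ∑ k ∈ range (Q.natDegree+1), Q.coeff k * VT k z := by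
          rw [Finset.sum_comm]
          exact Finset.sum_congr rfl fun k _ => by rw [← Finset.mul_sum, VT]
      _ = 0 := Finset.sum_eq_zero fun k hk => by
          rw [h k (by rw [mem_range] at hk; omega), mul_zero]
  set c : ℤ := e * (-1)^(m-1) with hcdef
  have hsum2 : ∑ i ∈ range z.length, (c * Q.eval ((i:ℤ)+1)) * z.getD i 0 = 0 := by
    have heq : ∑ i ∈ range z.length, (c * Q.eval ((i:ℤ)+1)) * z.getD i 0
        = c * ∑ i ∈ range z.length, Q.eval ((i:ℤ)+1) * z.getD i 0 := by
      rw [Finset.mul_sum]; exact Finset.sum_congr rfl fun i _ => by ring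
    rw [heq, hsum, mul_zero]
  have key : ∀ i ∈ range z.length,
      0 ≤ (c * Q.eval ((i:ℤ)+1)) * z.getD i 0 ∧
      ((c * Q.eval ((i:ℤ)+1)) * z.getD i 0 = 0 → z.getD i 0 = 0) := by
    intro i hi
    rw [mem_range] at hi
    set j := Nat.findGreatest (fun j' => b j' ≤ i) m with hjdef
    have hji : b j ≤ i :=
      Nat.findGreatest_spec (P := fun j' => b j' ≤ i) (Nat.zero_le m) (by simp [hbdef])
    have hjlem : j ≤ m := Nat.findGreatest_le m
    have hjm : j < m := by
      rcases Nat.lt_or_ge j m with h' | h'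
      · exact h'
      · exfalso
        have hjeq : j = m := le_antisymm hjlem h'
        rw [hjeq, hbm] at hji
        omega
    have hilt : i < b (j+1) := by
      by_contra hcon
      push_neg at hcon
      exact Nat.findGreatest_is_greatest (P := fun j' => b j' ≤ i)
        (Nat.lt_succ_self j) (by omega) hcon
    have hr : i - b j < (parts.getD j []).length := by
      have := hbsucc j; omega
    have hget : z.getD i 0 = (parts.getD j []).getD (i - b j) 0 := by
      have hfl := flatten_getD parts j (i - b j) hr
      rw [hflat] at hfl
      rw [← hfl]
      congr 1
      have hb' : (∑ j' ∈ range j, (parts.getD j' []).length) = b j := rfl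
      rw [hb']
      omega
    have hamem : z.getD i 0 ∈ parts.getD j [] := by
      rw [hget, List.getD_eq_getElem _ _ hr]
      exact List.getElem_mem hr
    have h1 : 0 ≤ e * (-1:ℤ)^j * z.getD i 0 := hesign j hjm _ hamem
    have h2 : 0 < (-1:ℤ)^(m-1-j)
        * ∏ j' ∈ range (m-1), (2*((i:ℤ)+1) - (2*(b (j'+1):ℤ)+1)) := by
      apply prod_sign _ _ _ (by omega)
      · intro j' hj'
        have hble : b (j'+1) ≤ b j := hbmono (by omega)
        have hc : (b (j'+1) : ℤ) ≤ (i : ℤ) := by exact_mod_cast le_trans hble hji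
        linarith
      · intro j' hja hjb
        have hble : b (j+1) ≤ b (j'+1) := hbmono (by omega)
        have hc : (i : ℤ) < (b (j'+1) : ℤ) := by exact_mod_cast lt_of_lt_of_le hilt hble
        linarith
    have hsplit : (-1:ℤ)^(m-1) = (-1:ℤ)^j * (-1:ℤ)^(m-1-j) := by
      rw [← pow_add]
      congr 1
      omega
    have heq : (c * Q.eval ((i:ℤ)+1)) * z.getD i 0
        = (e * (-1:ℤ)^j * z.getD i 0)
          * ((-1:ℤ)^(m-1-j) * ∏ j' ∈ range (m-1), (2*((i:ℤ)+1) - (2*(b (j'+1):ℤ)+1))) := by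
      rw [hcdef, hQeval, hsplit]; ring
    constructor
    · rw [heq]; exact mul_nonneg h1 h2.le
    · intro h0
      rw [heq] at h0
      rcases mul_eq_zero.1 h0 with h0 | h0
      · have hene : e * (-1:ℤ)^j ≠ 0 := by
          apply mul_ne_zero
          · rcases he with h' | h' <;> rw [h'] <;> norm_num
          · exact pow_ne_zero _ (by norm_num)
        rcases mul_eq_zero.1 h0 with h' | h'
        · exact absurd h' hene
        · exact h'
      · exact absurd h0 h2.ne'
  have hzero : ∀ i ∈ range z.length, z.getD i 0 = 0 := by
    intro i hi
    have h0 := (Finset.sum_eq_zero_iff_of_nonneg (fun i hi => (key i hi).1)).1 hsum2 i hi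
    exact (key i hi).2 h0
  rw [List.eq_replicate_iff]
  refine ⟨rfl, ?_⟩
  intro x hx
  obtain ⟨i, hi, rfl⟩ := List.mem_iff_getElem.1 hx
  have h0 := hzero i (mem_range.2 hi)
  rw [List.getD_eq_getElem _ _ hi] at h0
  exact h0
end

section
/- Let t ≥ 1, s ≥ 0, m ≥ 1 be integers and let φ : Σ_q^n → Z^{n'} be an injective map. Suppose C ⊆ Σ_q^n is a set such that for any x, y ∈ C with B_{t,s}(x) ∩ B_{t,s}(y) ≠ ∅, one has σ(φ(x) − φ(y)) ≤ m and VT^k(φ(x) − φ(y)) = 0 for every k ∈ [0, m−1]. Then any such x and y are equal, and consequently C is a t-deletion s-substitution correcting code. -/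
open Finset

/-- Sum of same-sign entries is zero implies all zero. -/
lemma sum_zero_of_sign (w : ℕ → ℤ) (N : ℕ) (e : ℤ) (he1 : e = 1 ∨ e = -1)
    (he : ∀ i < N, 0 ≤ e * w i) (hs : ∑ i ∈ Finset.range N, w i = 0) :
    ∀ i < N, w i = 0 := by
  have hsum : ∑ i ∈ Finset.range N, e * w i = 0 := by
    rw [← Finset.mul_sum, hs, mul_zero]
  have hz : ∀ i ∈ Finset.range N, e * w i = 0 := by
    rw [← Finset.sum_eq_zero_iff_of_nonneg (fun i hi => he i (Finset.mem_range.mp hi))]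
    exact hsum
  intro i hi
  have := hz i (Finset.mem_range.mpr hi)
  rcases he1 with h | h <;> subst h <;> linarith

lemma lemB : ∀ (K : ℕ) (w : ℕ → ℤ) (b : ℕ → ℕ) (N : ℕ),
    (∀ j, b j ≤ b (j+1)) → b 0 = 0 → b K = N →
    (∀ j < K, ∃ e : ℤ, (e = 1 ∨ e = -1) ∧ ∀ i, b j ≤ i → i < b (j+1) → 0 ≤ e * w i) →
    (∀ k < K, ∑ i ∈ Finset.range N, ((i:ℤ)+1)^k * w i = 0) →
    ∀ i < N, w i = 0 := by
  intro K
  induction K with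
  | zero =>
    intro w b N _ h0 hK _ _ i hi
    omega
  | succ K IH =>
    intro w b N hstep h0 hK hsign hVT i hi
    have hmono : Monotone b := monotone_nat_of_le_succ hstep
    have hsum0 : ∑ i ∈ Finset.range N, w i = 0 := by
      have := hVT 0 (Nat.succ_pos K)
      simpa using this
    rcases Nat.eq_zero_or_pos K with hK0 | hKpos
    · -- single interval
      subst hK0
      obtain ⟨e, he1, he⟩ := hsign 0 Nat.one_pos
      exact sum_zero_of_sign w N e he1
        (fun i hi => he i (by omega) (by rw [hK]; exact hi)) hsum0 i hi
    · -- at least two intervals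
      set c := b 1 with hc
      obtain ⟨e0, he01, he0⟩ := hsign 0 (Nat.succ_pos K)
      obtain ⟨e1, he11, he1⟩ := hsign 1 (by omega)
      set b' : ℕ → ℕ := fun j => if j = 0 then 0 else b (j+1) with hb'
      have hb'step : ∀ j, b' j ≤ b' (j+1) := by
        intro j
        simp only [hb']
        rcases Nat.eq_zero_or_pos j with h | h
        · subst h; simp
        · have : j ≠ 0 := by omega
          simp [this]
          exact hstep (j+1)
      have hb'0 : b' 0 = 0 := by simp [hb']
      have hb'K : b' K = N := by
        have : K ≠ 0 := by omega
        simp [hb', this, hK]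
      by_cases hee : e0 = e1
      · -- merge, same sign
        subst hee
        apply IH w b' N hb'step hb'0 hb'K
        · intro j hj
          rcases Nat.eq_zero_or_pos j with h | h
          · subst h
            refine ⟨e0, he01, fun i hi1 hi2 => ?_⟩
            simp only [hb'] at hi1 hi2
            rcases Nat.lt_or_ge i c with h' | h'
            · exact he0 i (by omega) h'
            · exact he1 i h' (by simpa using hi2)
          · obtain ⟨e, heq, hs⟩ := hsign (j+1) (by omega)
            refine ⟨e, heq, fun i hi1 hi2 => ?_⟩
            have hj0 : j ≠ 0 := by omega
            simp only [hb', if_neg hj0] at hi1 hi2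
            exact hs i (by simpa [hj0] using hi1) (by simpa using hi2)
        · intro k hk
          exact hVT k (by omega)
        · exact hi
      · -- opposite signs: multiply by (i+1-c)
        have he1' : e1 = -e0 := by rcases he01 with h|h <;> rcases he11 with h'|h' <;> omega
        set w' : ℕ → ℤ := fun i => ((i:ℤ)+1-c) * w i with hw'
        have hall : ∀ i < N, w' i = 0 := by
          apply IH w' b' N hb'step hb'0 hb'K
          · intro j hj
            rcases Nat.eq_zero_or_pos j with h | h
            · subst h
              refine ⟨e1, he11, fun i hi1 hi2 => ?_⟩
              simp only [hb'] at hi1 hi2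
              simp only [hw']
              rcases Nat.lt_or_ge i c with h' | h'
              · have h1 : 0 ≤ e0 * w i := he0 i (by omega) h'
                have h2 : (i:ℤ)+1-c ≤ 0 := by
                  have : (i:ℤ) + 1 ≤ c := by exact_mod_cast h'
                  linarith
                rw [he1']
                nlinarith
              · have h1 : 0 ≤ e1 * w i := he1 i h' (by simpa using hi2)
                have h2 : (0:ℤ) ≤ (i:ℤ)+1-c := by
                  have : (c:ℤ) ≤ i := by exact_mod_cast h'
                  linarith
                calc (0:ℤ) ≤ ((i:ℤ)+1-c) * (e1 * w i) := mul_nonneg h2 h1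
                  _ = e1 * (((i:ℤ)+1-c) * w i) := by ring
            · obtain ⟨e, heq, hs⟩ := hsign (j+1) (by omega)
              refine ⟨e, heq, fun i hi1 hi2 => ?_⟩
              have hj0 : j ≠ 0 := by omega
              simp only [hb', hj0] at hi1 hi2
              have hbi : b (j+1) ≤ i := by simpa [hj0] using hi1
              have hci : c ≤ i := le_trans (hmono (by omega : 1 ≤ j+1)) hbi
              have h1 : 0 ≤ e * w i := hs i hbi (by simpa using hi2)
              have h2 : (0:ℤ) ≤ (i:ℤ)+1-c := by
                have : (c:ℤ) ≤ i := by exact_mod_cast hci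
                linarith
              simp only [hw']
              calc (0:ℤ) ≤ ((i:ℤ)+1-c) * (e * w i) := mul_nonneg h2 h1
                _ = e * (((i:ℤ)+1-c) * w i) := by ring
          · intro k hk
            have h1 := hVT k (by omega)
            have h2 := hVT (k+1) (by omega)
            have : ∑ i ∈ Finset.range N, ((i:ℤ)+1)^k * w' i
                = ∑ i ∈ Finset.range N, (((i:ℤ)+1)^(k+1) * w i - c * (((i:ℤ)+1)^k * w i)) := by
              apply Finset.sum_congr rfl
              intro i _
              simp only [hw']
              ring
            rw [this, Finset.sum_sub_distrib, h2, ← Finset.mul_sum, h1]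
            ring
        -- deduce w i = 0
        have hz : ∀ i < N, (i:ℤ) + 1 ≠ c → w i = 0 := by
          intro i hiN hne
          have := hall i hiN
          simp only [hw'] at this
          rcases mul_eq_zero.mp this with h | h
          · exfalso; apply hne; linarith
          · exact h
        rcases Nat.eq_zero_or_pos c with hc0 | hcpos
        · exact hz i hi (by rw [hc0]; push_cast; omega)
        · have hcN : c ≤ N := by rw [← hK]; exact hmono (by omega)
          have hkey : ∀ i' < N, i' ≠ c - 1 → w i' = 0 := by
            intro i' hi' hne
            apply hz i' hi'
            omega
          have hwc : w (c-1) = 0 := by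
            have : ∑ i ∈ Finset.range N, w i = w (c-1) := by
              apply Finset.sum_eq_single_of_mem
              · exact Finset.mem_range.mpr (by omega)
              · intro b hb hbne
                exact hkey b (Finset.mem_range.mp hb) hbne
            rw [hsum0] at this
            exact this.symm
          rcases eq_or_ne i (c-1) with h | h
          · subst h; exact hwc
          · exact hkey i hi h

def bnd (parts : List (List ℤ)) (j : ℕ) : ℕ := ((parts.take j).map List.length).sum

lemma bnd_zero (parts : List (List ℤ)) : bnd parts 0 = 0 := rfl

lemma bnd_cons (p : List ℤ) (ps : List (List ℤ)) (j : ℕ) :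
    bnd (p :: ps) (j+1) = p.length + bnd ps j := by
  simp [bnd, List.take_succ_cons]

lemma bnd_step : ∀ (parts : List (List ℤ)) (j : ℕ), bnd parts j ≤ bnd parts (j+1) := by
  intro parts
  induction parts with
  | nil => intro j; simp [bnd]
  | cons p ps IH =>
    intro j
    cases j with
    | zero => simp [bnd_zero]
    | succ j => rw [bnd_cons, bnd_cons]; exact Nat.add_le_add_left (IH j) _

lemma bnd_len (parts : List (List ℤ)) : bnd parts parts.length = parts.flatten.length := by
  simp [bnd, List.take_length, List.length_flatten]

lemma mem_of_bnd : ∀ (parts : List (List ℤ)) (j i : ℕ), j < parts.length →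
    bnd parts j ≤ i → i < bnd parts (j+1) → parts.flatten.getD i 0 ∈ parts.getD j [] := by
  intro parts
  induction parts with
  | nil => intro j i h; simp at h
  | cons p ps IH =>
    intro j i hj h1 h2
    cases j with
    | zero =>
      rw [bnd_cons] at h2
      have hip : i < p.length := by
        have : bnd ps 0 = 0 := bnd_zero ps
        omega
      simp only [List.flatten_cons, List.getD_cons_zero]
      rw [List.getD_append _ _ _ _ hip, List.getD_eq_getElem p 0 hip]
      exact List.getElem_mem hip
    | succ j =>
      rw [bnd_cons] at h1 h2
      have hpi : p.length ≤ i := le_trans (Nat.le_add_right _ _) h1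
      simp only [List.flatten_cons]
      rw [List.getD_append_right _ _ _ _ hpi]
      have := IH j (i - p.length) (by simpa using hj) (by omega) (by omega)
      simpa using this

lemma sigma_set_nonempty (z : List ℤ) :
    {k | 0 < k ∧ ∃ parts : List (List ℤ),
      parts.length = k ∧ parts.flatten = z ∧ ∀ p ∈ parts, sameSign p}.Nonempty := by
  rcases List.eq_nil_or_concat z with h | _
  · subst h
    exact ⟨1, Nat.one_pos, [[]], rfl, rfl, by intro p hp; simp at hp; subst hp; left; simp⟩
  · refine ⟨z.length, ?_, z.map (fun a => [a]), by simp, ?_, ?_⟩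
    · rename_i h; obtain ⟨l, a, rfl⟩ := h; simp
    · clear * -
      induction z with
      | nil => simp
      | cons a l IH => simp [IH]
    · intro p hp
      simp only [List.mem_map] at hp
      obtain ⟨a, _, rfl⟩ := hp
      rcases le_total 0 a with h | h
      · left; intro x hx; simp at hx; omega
      · right; intro x hx; simp at hx; omega

lemma key_zero (z : List ℤ) (m : ℕ) (hσ : sigmaNum z ≤ m)
    (hVT : ∀ k < m, VT k z = 0) : ∀ i < z.length, z.getD i 0 = 0 := by
  have hmem := Nat.sInf_mem (sigma_set_nonempty z)
  obtain ⟨hpos, parts, hlen, hflat, hsame⟩ := hmem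
  set K := sigmaNum z with hKdef
  have hlen' : parts.length = K := by rw [hKdef, sigmaNum]; exact hlen
  apply lemB K (fun i => z.getD i 0) (bnd parts) z.length
  · exact fun j => bnd_step parts j
  · exact bnd_zero parts
  · rw [← hlen', ← hflat]; exact bnd_len parts
  · intro j hj
    have hjlen : j < parts.length := by rw [hlen']; exact hj
    have hmemp : parts.getD j [] ∈ parts := by
      rw [List.getD_eq_getElem parts [] hjlen]
      exact List.getElem_mem hjlen
    rcases hsame _ hmemp with h | h
    · refine ⟨1, Or.inl rfl, fun i hi1 hi2 => ?_⟩
      have hmem2 : z.getD i 0 ∈ parts.getD j [] := by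
        rw [← hflat]; exact mem_of_bnd parts j i hjlen hi1 hi2
      have := h _ hmem2
      linarith
    · refine ⟨-1, Or.inr rfl, fun i hi1 hi2 => ?_⟩
      have hmem2 : z.getD i 0 ∈ parts.getD j [] := by
        rw [← hflat]; exact mem_of_bnd parts j i hjlen hi1 hi2
      have := h _ hmem2
      linarith
  · intro k hk
    exact hVT k (by omega)

lemma main_eq (q n n' t s m : ℕ)
    (φ : List ℕ → List ℤ)
    (hφlen : ∀ x : List ℕ, x.length = n → (∀ a ∈ x, a < q) → (φ x).length = n')
    (hφinj : ∀ x y : List ℕ, x.length = n → (∀ a ∈ x, a < q) →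
      y.length = n → (∀ a ∈ y, a < q) → φ x = φ y → x = y)
    (C : Set (List ℕ))
    (hC : ∀ x ∈ C, x.length = n ∧ ∀ a ∈ x, a < q)
    (x : List ℕ) (hx : x ∈ C) (y : List ℕ) (hy : y ∈ C)
    (hσ : sigmaNum (List.zipWith (· - ·) (φ x) (φ y)) ≤ m)
    (hVT : ∀ k < m, VT k (List.zipWith (· - ·) (φ x) (φ y)) = 0) : x = y := by
  obtain ⟨hxlen, hxq⟩ := hC x hx
  obtain ⟨hylen, hyq⟩ := hC y hy
  have hlx : (φ x).length = n' := hφlen x hxlen hxq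
  have hly : (φ y).length = n' := hφlen y hylen hyq
  have hall := key_zero (List.zipWith (· - ·) (φ x) (φ y)) m hσ hVT
  have hφeq : φ x = φ y := by
    apply List.ext_getElem (by rw [hlx, hly])
    intro i h1 h2
    have hi : i < (List.zipWith (· - ·) (φ x) (φ y)).length := by
      rw [List.length_zipWith]; omega
    have h0 := hall i hi
    rw [List.getD_eq_getElem _ 0 hi, List.getElem_zipWith] at h0
    exact sub_eq_zero.mp h0
  exact hφinj x y hxlen hxq hylen hyq hφeq

/-- Theorem 2. Given an injection `φ : Σ_q^n → ℤ^{n'}`, if for any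
`x, y` in `C ⊆ Σ_q^n` with intersecting `t`-deletion `s`-substitution balls we have
`σ(φ(x) - φ(y)) ≤ m` and `VT^k(φ(x) - φ(y)) = 0` for all `k ∈ [0, m-1]`, then any such
`x, y` are equal, and `C` is a `t`-deletion `s`-substitution correcting code. -/
theorem stmt5 (q n n' t s m : ℕ) (hq : 2 ≤ q) (ht : 1 ≤ t) (hm : 1 ≤ m)
    (φ : List ℕ → List ℤ)
    (hφlen : ∀ x : List ℕ, x.length = n → (∀ a ∈ x, a < q) → (φ x).length = n')
    (hφinj : ∀ x y : List ℕ, x.length = n → (∀ a ∈ x, a < q) →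
      y.length = n → (∀ a ∈ y, a < q) → φ x = φ y → x = y)
    (C : Set (List ℕ))
    (hC : ∀ x ∈ C, x.length = n ∧ ∀ a ∈ x, a < q)
    (hcond : ∀ x ∈ C, ∀ y ∈ C, (ball q t s x ∩ ball q t s y).Nonempty →
      sigmaNum (List.zipWith (· - ·) (φ x) (φ y)) ≤ m ∧
      ∀ k < m, VT k (List.zipWith (· - ·) (φ x) (φ y)) = 0) :
    (∀ x ∈ C, ∀ y ∈ C, (ball q t s x ∩ ball q t s y).Nonempty → x = y) ∧
    (∀ x ∈ C, ∀ y ∈ C, x ≠ y → ball q t s x ∩ ball q t s y = ∅) := by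
  constructor
  · intro x hx y hy hne
    obtain ⟨hσ, hVT⟩ := hcond x hx y hy hne
    exact main_eq q n n' t s m φ hφlen hφinj C hC x hx y hy hσ hVT
  · intro x hx y hy hxy
    rw [← Set.not_nonempty_iff_eq_empty]
    intro hne
    obtain ⟨hσ, hVT⟩ := hcond x hx y hy hne
    exact hxy (main_eq q n n' t s m φ hφlen hφinj C hC x hx y hy hσ hVT)
end

section
/- Let x, y ∈ Σ_q^n and p ∈ [1, n]. Define x' = x_{[1,p]} x_{p+1} y_p x_{[p+1,n]} and y' = y_{[1,p]} x_{p+1} y_p y_{[p+1,n]} (i.e., the two symbols x_{p+1} and y_p are inserted after position p in both x and y; symbols at indices outside [1,n] are taken to be 0). Then σ(g(x) − g(y)) ≤ σ(g(x') − g(y')). -/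
open Finset

section Mono

lemma sameSign_of_sublist {z z' : List ℤ} (h : z.Sublist z') (hs : sameSign z') : sameSign z := by
  rcases hs with hs | hs
  · exact Or.inl fun a ha => hs a (h.subset ha)
  · exact Or.inr fun a ha => hs a (h.subset ha)

lemma exists_decomp {z : List ℤ} {L : List (List ℤ)} (h : z.Sublist L.flatten) :
    ∃ L', List.Forall₂ List.Sublist L' L ∧ L'.flatten = z := by
  induction L generalizing z with
  | nil => exact ⟨[], List.Forall₂.nil, by simpa using (List.sublist_nil.mp (by simpa using h))⟩
  | cons l L ih =>
    simp only [List.flatten_cons] at h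
    obtain ⟨a, b, rfl, ha, hb⟩ := List.sublist_append_iff.mp h
    obtain ⟨L', hL', rfl⟩ := ih hb
    exact ⟨a :: L', List.Forall₂.cons ha hL', rfl⟩

lemma sigmaNum_mono {z z' : List ℤ} (h : z.Sublist z') : sigmaNum z ≤ sigmaNum z' := by
  have hmem := Nat.sInf_mem (sigma_set_nonempty z')
  obtain ⟨hk, parts, hlen, hflat, hsame⟩ := hmem
  refine Nat.sInf_le ?_
  obtain ⟨L', hF, hfl⟩ := exists_decomp (hflat ▸ h)
  refine ⟨hk, L', by rw [sigmaNum, ← hlen]; exact hF.length_eq, hfl, ?_⟩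
  intro pp hpp
  obtain ⟨i, hi, rfl⟩ := List.mem_iff_getElem.mp hpp
  have hi2 : i < parts.length := hF.length_eq ▸ hi
  exact sameSign_of_sublist (hF.get hi hi2) (hsame _ (parts.getElem_mem hi2))

end Mono

section Arith

noncomputable def G (q : ℕ) (x : List ℕ) (i : ℕ) : ℤ :=
  ∑ j ∈ Finset.range (i + 1), (diffSeq q x).getD j 0

lemma diffSeq_getD_of_lt (q : ℕ) (x : List ℕ) (i : ℕ) (hi : i < x.length) :
    (diffSeq q x).getD i 0 =
      ((x.getD i 0 : ℤ) - (if i = 0 then 0 else (x.getD (i - 1) 0 : ℤ))) % (q : ℤ) := by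
  rw [diffSeq, List.getD_eq_getElem _ _ (by simpa using hi)]
  simp

lemma diffSeq_getD_of_ge (q : ℕ) (x : List ℕ) (i : ℕ) (hi : x.length ≤ i) :
    (diffSeq q x).getD i 0 = 0 := by
  rw [List.getD_eq_default]
  simpa [diffSeq] using hi

lemma length_gacc (q : ℕ) (x : List ℕ) : (gacc q x).length = x.length := by simp [gacc]

lemma gacc_getD (q : ℕ) (x : List ℕ) (i : ℕ) (hi : i < x.length) :
    (gacc q x).getD i 0 = G q x i := by
  rw [List.getD_eq_getElem _ _ (by simpa [length_gacc] using hi)]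
  simp [gacc, G]

lemma zip_sub_getD (u v : List ℤ) (i : ℕ) (h : i < u.length) (h' : i < v.length) :
    (List.zipWith (· - ·) u v).getD i 0 = u.getD i 0 - v.getD i 0 := by
  rw [List.getD_eq_getElem _ _ (by rw [List.length_zipWith]; omega), List.getElem_zipWith,
    List.getD_eq_getElem _ _ h, List.getD_eq_getElem _ _ h']

lemma getD_ins {α : Type*} (x : List α) (p : ℕ) (a b d : α) (hp : p ≤ x.length) (i : ℕ) :
    (x.take p ++ [a, b] ++ x.drop p).getD i d =
      if i < p then x.getD i d else if i = p then a else if i = p + 1 then b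
      else x.getD (i - 2) d := by
  have hlt : (x.take p).length = p := by simp [hp]
  rcases lt_or_ge i p with h | h
  · rw [List.append_assoc, List.getD_eq_getElem?_getD, List.getElem?_append_left (by omega),
      ← List.getD_eq_getElem?_getD, if_pos h]
    rw [List.getD_eq_getElem?_getD, List.getD_eq_getElem?_getD]
    congr 1
    rw [List.getElem?_take]
    simp [h]
  · rw [List.append_assoc, List.getD_eq_getElem?_getD, List.getElem?_append_right (by omega), hlt]
    rcases Nat.lt_or_ge i (p + 2) with h2 | h2
    · have : i = p ∨ i = p + 1 := by omega
      rcases this with rfl | rfl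
      · simp
      · simp [Nat.add_sub_cancel_left, if_neg (by omega : ¬ (p+1 < p)),
          if_neg (by omega : ¬ (p+1 = p))]
    · rw [if_neg (by omega), if_neg (by omega), if_neg (by omega)]
      have : i - p = (i - p - 2) + 2 := by omega
      rw [this]
      simp only [List.getElem?_cons_succ, List.cons_append, List.nil_append]
      rw [List.getElem?_drop, ← List.getD_eq_getElem?_getD]
      congr 1
      omega

lemma length_ins {α : Type*} (x : List α) (p : ℕ) (a b : α) (hp : p ≤ x.length) :
    (x.take p ++ [a, b] ++ x.drop p).length = x.length + 2 := by
  simp; omega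

lemma diffD_ins (q : ℕ) (x : List ℕ) (p a b : ℕ) (hp1 : 1 ≤ p) (hp : p ≤ x.length) (i : ℕ) :
    (diffSeq q (x.take p ++ [a, b] ++ x.drop p)).getD i 0 =
      if i < p then (diffSeq q x).getD i 0
      else if i = p then ((a : ℤ) - (x.getD (p - 1) 0 : ℤ)) % q
      else if i = p + 1 then ((b : ℤ) - (a : ℤ)) % q
      else if i = p + 2 then
        (if p < x.length then ((x.getD p 0 : ℤ) - (b : ℤ)) % q else 0)
      else (diffSeq q x).getD (i - 2) 0 := by
  set z := x.take p ++ [a, b] ++ x.drop p with hz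
  have hlen : z.length = x.length + 2 := length_ins x p a b hp
  rcases lt_or_ge i p with h | h
  · rw [if_pos h, diffSeq_getD_of_lt _ _ _ (by omega), diffSeq_getD_of_lt _ _ _ (by omega)]
    rw [getD_ins _ _ _ _ _ hp, if_pos h]
    rcases Nat.eq_zero_or_pos i with rfl | hi0
    · simp
    · rw [if_neg (by omega), if_neg (by omega), getD_ins _ _ _ _ _ hp, if_pos (by omega)]
  rw [if_neg (by omega)]
  rcases eq_or_lt_of_le h with rfl | h
  · rw [if_pos rfl, diffSeq_getD_of_lt _ _ _ (by omega),
      getD_ins _ _ _ _ _ hp, if_neg (by omega), if_pos rfl, if_neg (by omega),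
      getD_ins _ _ _ _ _ hp, if_pos (by omega)]
  rw [if_neg (by omega)]
  rcases eq_or_lt_of_le (show p + 1 ≤ i from h) with h1 | h
  · rw [if_pos h1.symm, h1.symm, diffSeq_getD_of_lt _ _ _ (by omega), if_neg (by omega),
      getD_ins _ _ _ _ _ hp, if_neg (by omega), if_neg (by omega), if_pos rfl,
      Nat.succ_sub_one, getD_ins _ _ _ _ _ hp, if_neg (by omega), if_pos rfl]
  rw [if_neg (by omega)]
  rcases eq_or_lt_of_le (show p + 2 ≤ i from h) with h2 | h
  · rw [if_pos h2.symm]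
    rcases lt_or_ge p x.length with hpl | hpl
    · rw [if_pos hpl, ← h2, diffSeq_getD_of_lt _ _ _ (by omega), if_neg (by omega),
        getD_ins _ _ _ _ _ hp, if_neg (by omega), if_neg (by omega), if_neg (by omega)]
      have : p + 2 - 2 = p := by omega
      rw [this, Nat.succ_sub_one, getD_ins _ _ _ _ _ hp, if_neg (by omega), if_neg (by omega),
        if_pos rfl]
    · rw [if_neg (by omega), ← h2, diffSeq_getD_of_ge _ _ _ (by omega)]
  rw [if_neg (by omega)]
  rcases lt_or_ge i (x.length + 2) with hi | hi
  · rw [diffSeq_getD_of_lt _ _ _ (by omega), diffSeq_getD_of_lt _ _ _ (by omega),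
      if_neg (by omega), if_neg (by omega),
      getD_ins _ _ _ _ _ hp, if_neg (by omega), if_neg (by omega), if_neg (by omega),
      getD_ins _ _ _ _ _ hp, if_neg (by omega), if_neg (by omega), if_neg (by omega)]
    have e1 : i - 1 - 2 = i - 2 - 1 := by omega
    rw [e1]
  · rw [diffSeq_getD_of_ge _ _ _ (by omega), diffSeq_getD_of_ge _ _ _ (by omega)]

lemma G_succ (q : ℕ) (x : List ℕ) (j : ℕ) :
    G q x (j + 1) = G q x j + (diffSeq q x).getD (j + 1) 0 := Finset.sum_range_succ _ _

lemma G_ins (q : ℕ) (x : List ℕ) (p a b : ℕ) (hp1 : 1 ≤ p) (hp : p ≤ x.length) (i : ℕ) :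
    G q (x.take p ++ [a, b] ++ x.drop p) i =
      if i < p then G q x i
      else if i = p then G q x (p - 1) + ((a : ℤ) - (x.getD (p - 1) 0 : ℤ)) % q
      else if i = p + 1 then
        G q x (p - 1) + ((a : ℤ) - (x.getD (p - 1) 0 : ℤ)) % q + ((b : ℤ) - (a : ℤ)) % q
      else G q x (i - 2) - G q x p + G q x (p - 1) + ((a : ℤ) - (x.getD (p - 1) 0 : ℤ)) % q
        + ((b : ℤ) - (a : ℤ)) % q
        + (if p < x.length then ((x.getD p 0 : ℤ) - (b : ℤ)) % q else 0) := by
  have key : ∀ i, i < p → G q (x.take p ++ [a, b] ++ x.drop p) i = G q x i := by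
    intro i hi
    refine Finset.sum_congr rfl fun j hj => ?_
    rw [Finset.mem_range] at hj
    rw [diffD_ins q x p a b hp1 hp, if_pos (by omega)]
  have keyp : G q (x.take p ++ [a, b] ++ x.drop p) p =
      G q x (p - 1) + ((a : ℤ) - (x.getD (p - 1) 0 : ℤ)) % q := by
    have hp' : p = (p - 1) + 1 := by omega
    rw [hp', G_succ, ← hp', key _ (by omega), diffD_ins q x p a b hp1 hp,
      if_neg (by omega), if_pos rfl]
  have keyp1 : G q (x.take p ++ [a, b] ++ x.drop p) (p + 1) =
      G q x (p - 1) + ((a : ℤ) - (x.getD (p - 1) 0 : ℤ)) % q + ((b : ℤ) - (a : ℤ)) % q := by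
    rw [G_succ, keyp, diffD_ins q x p a b hp1 hp, if_neg (by omega), if_neg (by omega),
      if_pos rfl]
  rcases lt_or_ge i p with h | h
  · rw [if_pos h]; exact key i h
  rw [if_neg (by omega)]
  rcases eq_or_lt_of_le h with rfl | h
  · rw [if_pos rfl]; exact keyp
  rw [if_neg (by omega)]
  rcases eq_or_lt_of_le (show p + 1 ≤ i from h) with h1 | h
  · rw [if_pos h1.symm, ← h1]; exact keyp1
  rw [if_neg (by omega)]
  have h2 : p + 2 ≤ i := by omega
  clear h
  induction i, h2 using Nat.le_induction with
  | base =>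
    have e : p + 2 - 2 = p := by omega
    rw [G_succ, keyp1, diffD_ins q x p a b hp1 hp, if_neg (by omega), if_neg (by omega),
      if_neg (by omega), if_pos rfl, e]
    ring
  | succ i hi ih =>
    have e1 : i + 1 - 2 = (i - 2) + 1 := by omega
    rw [G_succ, ih (by omega) (by omega), diffD_ins q x p a b hp1 hp,
      if_neg (show ¬(i + 1 < p) by omega), if_neg (show ¬(i + 1 = p) by omega),
      if_neg (show ¬(i + 1 = p + 1) by omega), if_neg (show ¬(i + 1 = p + 2) by omega),
      e1, G_succ]
    ring

end Arith

/-- Lemma 7. Inserting the two symbols `x_{p+1} y_p` after position `p`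
in both `x` and `y` can only increase the sign-preserving number of the difference of the
accumulative differential sequences. -/


theorem stmt6 (q n : ℕ) (hq : 2 ≤ q) (x y : List ℕ)
    (hxn : x.length = n) (hyn : y.length = n)
    (hxq : ∀ a ∈ x, a < q) (hyq : ∀ a ∈ y, a < q)
    (p : ℕ) (hp1 : 1 ≤ p) (hpn : p ≤ n) :
    sigmaNum (List.zipWith (· - ·) (gacc q x) (gacc q y)) ≤
      sigmaNum (List.zipWith (· - ·)
        (gacc q (x.take p ++ [x.getD p 0, y.getD (p - 1) 0] ++ x.drop p))
        (gacc q (y.take p ++ [x.getD p 0, y.getD (p - 1) 0] ++ y.drop p))) := by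
  have hpx : p ≤ x.length := by omega
  have hpy : p ≤ y.length := by omega
  refine sigmaNum_mono ?_
  set h1 := List.zipWith (· - ·) (gacc q x) (gacc q y) with hh1
  set h2 := List.zipWith (· - ·)
    (gacc q (x.take p ++ [x.getD p 0, y.getD (p - 1) 0] ++ x.drop p))
    (gacc q (y.take p ++ [x.getD p 0, y.getD (p - 1) 0] ++ y.drop p)) with hh2
  have lh1 : h1.length = n := by
    rw [hh1, List.length_zipWith, length_gacc, length_gacc, hxn, hyn, min_self]
  have lh2 : h2.length = n + 2 := by
    rw [hh2, List.length_zipWith, length_gacc, length_gacc, length_ins _ _ _ _ hpx,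
      length_ins _ _ _ _ hpy, hxn, hyn, min_self]
  have e1 : ∀ i : ℕ, i < p → h2.getD i 0 = h1.getD i 0 := by
    intro i hi
    rw [hh1, hh2,
      zip_sub_getD _ _ i (by rw [length_gacc, length_ins _ _ _ _ hpx]; omega)
        (by rw [length_gacc, length_ins _ _ _ _ hpy]; omega),
      zip_sub_getD _ _ i (by rw [length_gacc]; omega) (by rw [length_gacc]; omega),
      gacc_getD _ _ _ (by rw [length_ins _ _ _ _ hpx]; omega),
      gacc_getD _ _ _ (by rw [length_ins _ _ _ _ hpy]; omega),
      gacc_getD _ _ _ (by omega), gacc_getD _ _ _ (by omega),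
      G_ins _ _ _ _ _ hp1 hpx, G_ins _ _ _ _ _ hp1 hpy, if_pos hi, if_pos hi]
  have e2 : ∀ i : ℕ, p + 2 ≤ i → i < n + 2 → h2.getD i 0 = h1.getD (i - 2) 0 := by
    intro i hi1 hi2
    have hpn' : p < n := by omega
    rw [hh1, hh2,
      zip_sub_getD _ _ i (by rw [length_gacc, length_ins _ _ _ _ hpx]; omega)
        (by rw [length_gacc, length_ins _ _ _ _ hpy]; omega),
      zip_sub_getD _ _ (i - 2) (by rw [length_gacc]; omega) (by rw [length_gacc]; omega),
      gacc_getD _ _ _ (by rw [length_ins _ _ _ _ hpx]; omega),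
      gacc_getD _ _ _ (by rw [length_ins _ _ _ _ hpy]; omega),
      gacc_getD _ _ _ (by omega), gacc_getD _ _ _ (by omega),
      G_ins _ _ _ _ _ hp1 hpx, G_ins _ _ _ _ _ hp1 hpy,
      if_neg (show ¬(i < p) by omega), if_neg (show ¬(i < p) by omega),
      if_neg (show ¬(i = p) by omega), if_neg (show ¬(i = p) by omega),
      if_neg (show ¬(i = p + 1) by omega), if_neg (show ¬(i = p + 1) by omega),
      if_pos (show p < x.length by omega), if_pos (show p < y.length by omega)]
    have dxp : G q x p = G q x (p - 1) + ((x.getD p 0 : ℤ) - (x.getD (p - 1) 0 : ℤ)) % q := by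
      have hp' : p = (p - 1) + 1 := by omega
      rw [hp', G_succ, ← hp', diffSeq_getD_of_lt _ _ _ (by omega), if_neg (by omega)]
    have dyp : G q y p = G q y (p - 1) + ((y.getD p 0 : ℤ) - (y.getD (p - 1) 0 : ℤ)) % q := by
      have hp' : p = (p - 1) + 1 := by omega
      rw [hp', G_succ, ← hp', diffSeq_getD_of_lt _ _ _ (by omega), if_neg (by omega)]
    rw [dxp, dyp]
    ring
  have hple : p ≤ h1.length := by omega
  have key : h2 = h1.take p ++ [h2.getD p 0, h2.getD (p + 1) 0] ++ h1.drop p := by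
    apply List.ext_getElem
    · rw [lh2, length_ins _ _ _ _ hple, lh1]
    · intro i hi1 hi2
      rw [← List.getD_eq_getElem _ 0, ← List.getD_eq_getElem _ 0, getD_ins _ _ _ _ _ hple]
      rw [lh2] at hi1
      by_cases hip : i < p
      · rw [if_pos hip]; exact e1 i hip
      rw [if_neg hip]
      by_cases hip2 : i = p
      · rw [if_pos hip2, hip2]
      rw [if_neg hip2]
      by_cases hip3 : i = p + 1
      · rw [if_pos hip3, hip3]
      rw [if_neg hip3]
      exact e2 i (by omega) hi1
  rw [key]
  conv_lhs => rw [← List.take_append_drop p h1]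
  rw [List.append_assoc]
  exact List.Sublist.append_left ((List.sublist_cons_self _ _).cons _) _
end

section
/- Let x, y ∈ Σ_2^n be binary sequences such that deleting position p_x from x yields the same sequence as deleting position p_y from y, for some 1 ≤ p_x ≤ p_y ≤ n. Then either f(x)_i − f(y)_i ∈ {0, 1} for all i ∈ [1, n], or f(x)_i − f(y)_i ∈ {−1, 0} for all i ∈ [1, n]. Consequently, for every integer k ≥ 0, |VT^k(f(x)) − VT^k(f(y))| ≤ Σ_{i=1}^n i^k. -/
open Finset

lemma facc_getD (x : List ℕ) {i : ℕ} (h : i < x.length) :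
    (facc x).getD i 0 = ∑ j ∈ Finset.range (i+1), (x.getD j 0 : ℤ) := by
  simp [facc, List.getD_eq_getElem?_getD, List.getElem?_map, List.getElem?_range, h]

lemma facc_length (x : List ℕ) : (facc x).length = x.length := by simp [facc]

lemma sum_pow_shift (k m : ℕ) :
    ∑ i ∈ Finset.range m, ((i:ℤ)+1)^k = ∑ i ∈ Finset.Icc 1 m, (i:ℤ)^k := by
  induction m with
  | zero => simp
  | succ m ih =>
    rw [Finset.sum_range_succ, ih, Finset.sum_Icc_succ_top (by omega)]
    push_cast
    ring

/-- Lemma 8. If deleting position `p_x` from the binary sequence `x`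
yields the same sequence as deleting position `p_y` from `y` (with `p_x ≤ p_y`), then the
entrywise differences of the accumulative sequences all lie in `{0,1}` or all lie in
`{-1,0}`; consequently `|VT^k(f(x)) - VT^k(f(y))| ≤ ∑_{i=1}^n i^k` for every `k ≥ 0`. -/
theorem stmt7 (n : ℕ) (x y : List ℕ)
    (hxn : x.length = n) (hyn : y.length = n)
    (hx2 : ∀ a ∈ x, a < 2) (hy2 : ∀ a ∈ y, a < 2)
    (px py : ℕ) (h1 : 1 ≤ px) (h2 : px ≤ py) (h3 : py ≤ n)
    (hdel : x.eraseIdx (px - 1) = y.eraseIdx (py - 1)) :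
    ((∀ i ∈ Finset.Icc 1 n,
        (facc x).getD (i - 1) 0 - (facc y).getD (i - 1) 0 ∈ ({0, 1} : Set ℤ)) ∨
     (∀ i ∈ Finset.Icc 1 n,
        (facc x).getD (i - 1) 0 - (facc y).getD (i - 1) 0 ∈ ({-1, 0} : Set ℤ))) ∧
    ∀ k : ℕ, |VT k (facc x) - VT k (facc y)| ≤ ∑ i ∈ Finset.Icc 1 n, (i : ℤ) ^ k := by
  
  set p := px - 1 with hp
  set q := py - 1 with hq
  have hpq : p ≤ q := Nat.sub_le_sub_right h2 1
  have hqn : q < n := lt_of_lt_of_le (Nat.sub_lt (lt_of_lt_of_le h1 h2) one_pos) h3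
  have hgd : ∀ j : ℕ, (if j < p then x.getD j 0 else x.getD (j+1) 0)
      = (if j < q then y.getD j 0 else y.getD (j+1) 0) := by
    intro j
    have := congrArg (fun l : List ℕ => l.getD j 0) hdel
    simpa [List.getD_eq_getElem?_getD, List.getElem?_eraseIdx,
      apply_ite (fun o : Option ℕ => o.getD 0)] using this
  have hA : ∀ j, j < p → x.getD j 0 = y.getD j 0 := by
    intro j hj
    have := hgd j
    rw [if_pos hj, if_pos (lt_of_lt_of_le hj hpq)] at this
    exact this
  have hB : ∀ j, p ≤ j → j < q → x.getD (j+1) 0 = y.getD j 0 := by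
    intro j hj1 hj2
    have := hgd j
    rw [if_neg (Nat.not_lt.mpr hj1), if_pos hj2] at this
    exact this
  have hC : ∀ j, q ≤ j → x.getD (j+1) 0 = y.getD (j+1) 0 := by
    intro j hj
    have := hgd j
    rw [if_neg (Nat.not_lt.mpr (le_trans hpq hj)), if_neg (Nat.not_lt.mpr hj)] at this
    exact this
  have key : ∀ i, i < n → (facc x).getD i 0 - (facc y).getD i 0 =
      if i < p then 0 else (x.getD p 0 : ℤ) - (y.getD (min i q) 0 : ℤ) := by
    intro i
    induction i with
    | zero =>
      intro h0
      rw [facc_getD x (by omega), facc_getD y (by omega)]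
      simp only [zero_add, Finset.sum_range_one]
      by_cases hp0 : 0 < p
      · rw [if_pos hp0, hA 0 hp0]; ring
      · have hpz : p = 0 := by omega
        rw [if_neg hp0, hpz, Nat.min_eq_left (Nat.zero_le q)]
    | succ i ih =>
      intro hin
      have hin' : i < n := by omega
      have expand : (facc x).getD (i+1) 0 - (facc y).getD (i+1) 0
          = ((facc x).getD i 0 - (facc y).getD i 0)
            + ((x.getD (i+1) 0 : ℤ) - (y.getD (i+1) 0 : ℤ)) := by
        rw [facc_getD x (by omega), facc_getD y (by omega),
            facc_getD x (by omega), facc_getD y (by omega),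
            Finset.sum_range_succ (n := i+1), Finset.sum_range_succ (n := i+1)]
        ring
      rw [expand, ih hin']
      by_cases hc1 : i + 1 < p
      · rw [if_pos hc1, if_pos (by omega)]
        rw [hA (i+1) hc1]; ring
      · rw [if_neg hc1]
        by_cases hc2 : i < p
        · have hip : i + 1 = p := by omega
          have hm : min (i+1) q = i + 1 := by omega
          rw [if_pos hc2, hm, ← hip]
          ring
        · rw [if_neg hc2]
          by_cases hc3 : i < q
          · have hm1 : min i q = i := by omega
            have hm2 : min (i+1) q = i + 1 := by omega
            rw [hm1, hm2, hB i (by omega) hc3]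
            ring
          · have hm1 : min i q = q := by omega
            have hm2 : min (i+1) q = q := by omega
            rw [hm1, hm2, hC i (by omega)]
            ring
  have hxb : ∀ j, j < n → x.getD j 0 < 2 := by
    intro j hj
    rw [List.getD_eq_getElem x 0 (by omega)]
    exact hx2 _ (List.getElem_mem _)
  have hyb : ∀ j, j < n → y.getD j 0 < 2 := by
    intro j hj
    rw [List.getD_eq_getElem y 0 (by omega)]
    exact hy2 _ (List.getElem_mem _)
  have hpn : p < n := by omega
  constructor
  · have hc01 : x.getD p 0 = 0 ∨ x.getD p 0 = 1 := by have := hxb p hpn; omega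
    rcases hc01 with hc | hc
    · right
      intro i hi
      simp only [Finset.mem_Icc] at hi
      rw [key (i-1) (by omega), hc]
      split_ifs
      · simp
      · have := hyb (min (i-1) q) (by omega)
        have h01 : y.getD (min (i-1) q) 0 = 0 ∨ y.getD (min (i-1) q) 0 = 1 := by omega
        rcases h01 with h | h <;> rw [h] <;> simp
    · left
      intro i hi
      simp only [Finset.mem_Icc] at hi
      rw [key (i-1) (by omega), hc]
      split_ifs
      · simp
      · have := hyb (min (i-1) q) (by omega)
        have h01 : y.getD (min (i-1) q) 0 = 0 ∨ y.getD (min (i-1) q) 0 = 1 := by omega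
        rcases h01 with h | h <;> rw [h] <;> simp
  · intro k
    have habs : ∀ j, j < n → |(facc x).getD j 0 - (facc y).getD j 0| ≤ 1 := by
      intro j hj
      rw [key j hj]
      split_ifs
      · simp
      · have h1' := hyb (min j q) (by omega)
        have h2' := hxb p hpn
        rw [abs_le]
        constructor <;> [skip; skip] <;> omega
    have hdiff : VT k (facc x) - VT k (facc y)
        = ∑ i ∈ Finset.range n, ((i:ℤ)+1)^k * ((facc x).getD i 0 - (facc y).getD i 0) := by
      unfold VT
      rw [facc_length, facc_length, hxn, hyn, ← Finset.sum_sub_distrib]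
      exact Finset.sum_congr rfl fun i _ => by ring
    rw [hdiff]
    calc |∑ i ∈ Finset.range n, ((i:ℤ)+1)^k * ((facc x).getD i 0 - (facc y).getD i 0)|
        ≤ ∑ i ∈ Finset.range n, |((i:ℤ)+1)^k * ((facc x).getD i 0 - (facc y).getD i 0)| :=
          Finset.abs_sum_le_sum_abs _ _
      _ ≤ ∑ i ∈ Finset.range n, ((i:ℤ)+1)^k := by
          apply Finset.sum_le_sum
          intro i hi
          rw [Finset.mem_range] at hi
          rw [abs_mul, abs_pow]
          have hnn : |(i:ℤ)+1| = (i:ℤ)+1 := abs_of_nonneg (by positivity)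
          rw [hnn]
          calc ((i:ℤ)+1)^k * |(facc x).getD i 0 - (facc y).getD i 0|
              ≤ ((i:ℤ)+1)^k * 1 := by
                apply mul_le_mul_of_nonneg_left (habs i hi) (by positivity)
            _ = ((i:ℤ)+1)^k := mul_one _
      _ = ∑ i ∈ Finset.Icc 1 n, (i:ℤ)^k := sum_pow_shift k n
end

section
/- Let x, y ∈ Σ_q^n be such that deleting position p_x from x yields the same sequence as deleting position p_y from y, for some 1 ≤ p_x ≤ p_y ≤ n. Then either g(x)_i − g(y)_i ∈ [0, q] for all i ∈ [1, n], or g(x)_i − g(y)_i ∈ [−q, 0] for all i ∈ [1, n]; moreover |g(x)_1 − g(y)_1| ≤ q − 1. Consequently, for every integer k ≥ 0, |VT^k(g(x)) − VT^k(g(y))| ≤ q·Σ_{i=1}^n i^k − 1. -/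
open Finset

def dd (q : ℕ) (x : List ℕ) (i : ℕ) : ℤ :=
  ((x.getD i 0 : ℤ) - (if i = 0 then 0 else (x.getD (i - 1) 0 : ℤ))) % (q : ℤ)

def gg (q : ℕ) (x : List ℕ) (i : ℕ) : ℤ := ∑ j ∈ Finset.range (i + 1), dd q x j

lemma dd_nonneg (q : ℕ) (hq : 2 ≤ q) (x : List ℕ) (i : ℕ) : 0 ≤ dd q x i :=
  Int.emod_nonneg _ (by exact_mod_cast (by omega : q ≠ 0))

lemma dd_lt (q : ℕ) (hq : 2 ≤ q) (x : List ℕ) (i : ℕ) : dd q x i < q :=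
  Int.emod_lt_of_pos _ (by exact_mod_cast (by omega : 0 < q))

lemma gg_succ (q : ℕ) (x : List ℕ) (i : ℕ) : gg q x (i + 1) = gg q x i + dd q x (i + 1) :=
  Finset.sum_range_succ _ _

lemma gg_zero (q : ℕ) (x : List ℕ) : gg q x 0 = dd q x 0 := Finset.sum_range_one _

lemma diffD (q : ℕ) (x : List ℕ) (j : ℕ) (h : j < x.length) :
    (diffSeq q x).getD j 0 = dd q x j := by
  rw [List.getD_eq_getElem _ _ (by simp [diffSeq, h])]
  simp [diffSeq, dd, h]

lemma gaccD (q : ℕ) (x : List ℕ) (i : ℕ) (h : i < x.length) :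
    (gacc q x).getD i 0 = gg q x i := by
  rw [List.getD_eq_getElem _ _ (by simp [gacc, h])]
  simp only [gacc, List.getElem_map, List.getElem_range]
  exact Finset.sum_congr rfl fun j hj => diffD q x j (by simp at hj; omega)

lemma erase_getD (x : List ℕ) (a j : ℕ) :
    (x.eraseIdx a).getD j 0 = if j < a then x.getD j 0 else x.getD (j + 1) 0 := by
  simp only [List.getD_eq_getElem?_getD, List.getElem?_eraseIdx]
  split <;> rfl

lemma dd_erase_lt (q : ℕ) (x : List ℕ) (a j : ℕ) (hj : j < a) :
    dd q (x.eraseIdx a) j = dd q x j := by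
  unfold dd
  rw [erase_getD, if_pos hj]
  rcases Nat.eq_zero_or_pos j with h0 | h0
  · simp [h0]
  · rw [if_neg (by omega), if_neg (by omega), erase_getD, if_pos (by omega)]

lemma dd_erase_ge (q : ℕ) (x : List ℕ) (a j : ℕ) (hj : a + 1 ≤ j) :
    dd q (x.eraseIdx a) j = dd q x (j + 1) := by
  unfold dd
  rw [erase_getD, if_neg (by omega), if_neg (by omega), if_neg (by omega),
    erase_getD, if_neg (by omega)]
  have : j - 1 + 1 = j := by omega
  have : j + 1 - 1 = j := by omega
  simp only [Nat.add_sub_cancel, ‹j - 1 + 1 = j›]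

lemma mod_split (q : ℕ) (hq : 2 ≤ q) (A B : ℤ) :
    ∃ ε : ℤ, (ε = 0 ∨ ε = 1) ∧ (A + B) % q = A % q + B % q - ε * q := by
  have hqz : (q : ℤ) ≠ 0 := by exact_mod_cast (by omega : q ≠ 0)
  have hqpos : (0 : ℤ) < q := by exact_mod_cast (by omega : 0 < q)
  set S : ℤ := A % q + B % q with hS
  have hS0 : 0 ≤ S := by
    have := Int.emod_nonneg A hqz; have := Int.emod_nonneg B hqz; omega
  have hS1 : S ≤ 2 * q - 2 := by
    have := Int.emod_lt_of_pos A hqpos; have := Int.emod_lt_of_pos B hqpos; omega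
  have hdiv : (q : ℤ) * (S / q) + S % q = S := Int.mul_ediv_add_emod S q
  have hrem0 : 0 ≤ S % q := Int.emod_nonneg S hqz
  have hrem1 : S % q < q := Int.emod_lt_of_pos S hqpos
  have hmod : (A + B) % q = S % q := by rw [hS, Int.add_emod]
  refine ⟨S / q, ?_, by rw [hmod]; linarith⟩
  rcases lt_trichotomy (S / q) 0 with h | h | h
  · exfalso; nlinarith
  · exact Or.inl h
  · right
    rcases lt_trichotomy (S / q) 1 with h' | h' | h'
    · omega
    · exact h'
    · exfalso; nlinarith

lemma dd_erase_eq (q : ℕ) (hq : 2 ≤ q) (x : List ℕ) (a : ℕ) :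
    ∃ ε : ℤ, (ε = 0 ∨ ε = 1) ∧
      dd q (x.eraseIdx a) a = dd q x a + dd q x (a + 1) - ε * q := by
  set p : ℤ := if a = 0 then 0 else (x.getD (a - 1) 0 : ℤ) with hp
  obtain ⟨ε, hε, hkey⟩ := mod_split q hq ((x.getD a 0 : ℤ) - p)
      ((x.getD (a + 1) 0 : ℤ) - (x.getD a 0 : ℤ))
  refine ⟨ε, hε, ?_⟩
  have h1 : dd q (x.eraseIdx a) a
      = (((x.getD a 0 : ℤ) - p) + ((x.getD (a + 1) 0 : ℤ) - (x.getD a 0 : ℤ))) % q := by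
    unfold dd
    rw [erase_getD, if_neg (lt_irrefl a)]
    congr 1
    rcases Nat.eq_zero_or_pos a with h0 | h0
    · rw [if_pos h0, hp, if_pos h0]; ring
    · rw [if_neg (by omega), erase_getD, if_pos (by omega), hp, if_neg (by omega)]; ring
  have h2 : dd q x a = ((x.getD a 0 : ℤ) - p) % q := by
    unfold dd; rw [hp]
  have h3 : dd q x (a + 1) = ((x.getD (a + 1) 0 : ℤ) - (x.getD a 0 : ℤ)) % q := by
    unfold dd; rw [if_neg (by omega)]; norm_num
  rw [h1, h2, h3, hkey]

lemma del_gg (q : ℕ) (hq : 2 ≤ q) (x : List ℕ) (a : ℕ) :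
    ∃ ε : ℤ, (ε = 0 ∨ ε = 1) ∧
      (∀ j < a, gg q (x.eraseIdx a) j = gg q x j) ∧
      (∀ j, a ≤ j → gg q (x.eraseIdx a) j = gg q x (j + 1) - ε * q) := by
  obtain ⟨ε, hε, hεeq⟩ := dd_erase_eq q hq x a
  refine ⟨ε, hε, ?_, ?_⟩
  · intro j hj
    exact Finset.sum_congr rfl fun t ht => dd_erase_lt q x a t (by simp at ht; omega)
  · intro j hj
    induction j, hj using Nat.le_induction with
    | base =>
      have e1 : gg q (x.eraseIdx a) a = (∑ t ∈ Finset.range a, dd q x t)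
          + dd q (x.eraseIdx a) a := by
        rw [gg, Finset.sum_range_succ]
        congr 1
        exact Finset.sum_congr rfl fun t ht => dd_erase_lt q x a t (by simpa using ht)
      have e2 : gg q x (a + 1) = (∑ t ∈ Finset.range a, dd q x t)
          + dd q x a + dd q x (a + 1) := by
        rw [gg, Finset.sum_range_succ, Finset.sum_range_succ]
      rw [e1, e2, hεeq]; ring
    | succ j hj ih =>
      rw [gg_succ q (x.eraseIdx a) j, ih, dd_erase_ge q x a (j + 1) (by omega),
        gg_succ q x (j + 1)]
      ring

lemma sum_bound (q k m : ℕ) (hq : 2 ≤ q) (D : ℕ → ℤ) (h0 : D 0 ≤ (q : ℤ) - 1)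
    (hb : ∀ i, 0 ≤ D i ∧ D i ≤ q) :
    0 ≤ ∑ i ∈ Finset.range (m + 1), ((i : ℤ) + 1) ^ k * D i ∧
    ∑ i ∈ Finset.range (m + 1), ((i : ℤ) + 1) ^ k * D i
      ≤ (q : ℤ) * ∑ i ∈ Finset.Icc 1 (m + 1), (i : ℤ) ^ k - 1 := by
  have hpow : ∀ i : ℕ, (0 : ℤ) ≤ ((i : ℤ) + 1) ^ k := fun i => by positivity
  constructor
  · exact Finset.sum_nonneg fun i _ => mul_nonneg (hpow i) (hb i).1
  · have hIcc : ∑ i ∈ Finset.Icc 1 (m + 1), (i : ℤ) ^ k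
        = ∑ i ∈ Finset.range (m + 1), ((i : ℤ) + 1) ^ k := by
      rw [← Finset.Ico_add_one_right_eq_Icc, Finset.sum_Ico_eq_sum_range]
      exact Finset.sum_congr (by norm_num) fun i _ => by push_cast; ring_nf
    rw [hIcc, Finset.sum_range_succ', Finset.mul_sum, Finset.sum_range_succ']
    have hterm : ∀ i ∈ Finset.range m,
        (((i : ℤ) + 1) + 1) ^ k * D (i + 1) ≤ (q : ℤ) * (((i : ℤ) + 1) + 1) ^ k := by
      intro i _
      rw [mul_comm ((q : ℤ)) _]
      exact mul_le_mul_of_nonneg_left (hb (i + 1)).2 (hpow (i + 1))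
    have hsum := Finset.sum_le_sum hterm
    have e1 : ∀ i ∈ Finset.range m,
        ((i : ℤ) + 1 + 1) ^ k * D (i + 1) = (((i + 1 : ℕ) : ℤ) + 1) ^ k * D (i + 1) := by
      intro i _; push_cast; ring_nf
    have e2 : ∀ i ∈ Finset.range m,
        (q : ℤ) * ((i : ℤ) + 1 + 1) ^ k = (q : ℤ) * (((i + 1 : ℕ) : ℤ) + 1) ^ k := by
      intro i _; push_cast; ring_nf
    rw [Finset.sum_congr rfl e1, Finset.sum_congr rfl e2] at hsum
    simp only [Nat.cast_zero, zero_add, one_pow, one_mul, mul_one] at *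
    linarith

/-- Lemma 9. If deleting position `p_x` from `x ∈ Σ_q^n` yields the same
sequence as deleting position `p_y` from `y ∈ Σ_q^n` (with `p_x ≤ p_y`), then the entrywise
differences of the accumulative differential sequences all lie in `[0, q]` or all lie in
`[-q, 0]`, the first difference has absolute value at most `q - 1`, and
`|VT^k(g(x)) - VT^k(g(y))| ≤ q ∑_{i=1}^n i^k - 1` for every `k ≥ 0`. -/
theorem stmt8 (q n : ℕ) (hq : 2 ≤ q) (x y : List ℕ)
    (hxn : x.length = n) (hyn : y.length = n)
    (hxq : ∀ a ∈ x, a < q) (hyq : ∀ a ∈ y, a < q)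
    (px py : ℕ) (h1 : 1 ≤ px) (h2 : px ≤ py) (h3 : py ≤ n)
    (hdel : x.eraseIdx (px - 1) = y.eraseIdx (py - 1)) :
    ((∀ i ∈ Finset.Icc 1 n,
        (gacc q x).getD (i - 1) 0 - (gacc q y).getD (i - 1) 0 ∈ Set.Icc (0 : ℤ) q) ∨
     (∀ i ∈ Finset.Icc 1 n,
        (gacc q x).getD (i - 1) 0 - (gacc q y).getD (i - 1) 0 ∈ Set.Icc (-(q : ℤ)) 0)) ∧
    |(gacc q x).getD 0 0 - (gacc q y).getD 0 0| ≤ (q : ℤ) - 1 ∧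
    ∀ k : ℕ, |VT k (gacc q x) - VT k (gacc q y)| ≤
      (q : ℤ) * ∑ i ∈ Finset.Icc 1 n, (i : ℤ) ^ k - 1 := by

  have hq0 : (0 : ℤ) < q := by exact_mod_cast (by omega : 0 < q)
  have hn : 1 ≤ n := by omega
  obtain ⟨a, rfl⟩ : ∃ a, px = a + 1 := ⟨px - 1, by omega⟩
  obtain ⟨b, rfl⟩ : ∃ b, py = b + 1 := ⟨py - 1, by omega⟩
  simp only [Nat.add_sub_cancel] at hdel
  have hab : a ≤ b := by omega
  have hbn : b < n := by omega
  obtain ⟨εx, hεx, hx1, hx2⟩ := del_gg q hq x a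
  obtain ⟨εy, hεy, hy1, hy2⟩ := del_gg q hq y b
  rw [hdel] at hx1 hx2
  have hE1 : ∀ i < a, gg q x i = gg q y i := fun i hi => by
    rw [← hx1 i hi, hy1 i (lt_of_lt_of_le hi hab)]
  have hE2 : ∀ i, a ≤ i → i < b → gg q x i - gg q y i = εx * q - dd q x (i + 1) := by
    intro i hi hib
    have h := hx2 i hi
    have h' := hy1 i hib
    have hs := gg_succ q x i
    rw [h'] at h
    linarith
  have hE3 : ∀ i, b + 1 ≤ i → gg q x i - gg q y i = (εx - εy) * q := by
    intro i hi
    obtain ⟨j, rfl⟩ : ∃ j, i = j + 1 := ⟨i - 1, by omega⟩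
    have h := hx2 j (by omega)
    have h' := hy2 j (by omega)
    rw [h] at h'
    linarith
  have hE4 : a < b → gg q x b - gg q y b = εx * q - dd q y b := by
    intro hab'
    obtain ⟨j, rfl⟩ : ∃ j, b = j + 1 := ⟨b - 1, by omega⟩
    have h := hx2 j (by omega)
    have h' := hy1 j (by omega)
    have hs := gg_succ q y j
    linarith
  have hE5 : gg q x a - gg q y a = dd q x a - dd q y a := by
    rcases Nat.eq_zero_or_pos a with rfl | h0
    · rw [gg_zero, gg_zero]
    · obtain ⟨j, rfl⟩ : ∃ j, a = j + 1 := ⟨a - 1, by omega⟩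
      have h := hE1 j (by omega)
      have hs1 := gg_succ q x j
      have hs2 := gg_succ q y j
      linarith
  have hΔ0 : gg q x 0 - gg q y 0 = dd q x 0 - dd q y 0 := by rw [gg_zero, gg_zero]
  have key : (∀ i, 0 ≤ gg q x i - gg q y i ∧ gg q x i - gg q y i ≤ q) ∨
      (∀ i, -(q : ℤ) ≤ gg q x i - gg q y i ∧ gg q x i - gg q y i ≤ 0) := by
    have bxa := dd_nonneg q hq x a; have bxa' := dd_lt q hq x a
    have bya := dd_nonneg q hq y a; have bya' := dd_lt q hq y a
    have bx1 := dd_nonneg q hq x (a + 1); have bx1' := dd_lt q hq x (a + 1)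
    have by1 := dd_nonneg q hq y (a + 1); have by1' := dd_lt q hq y (a + 1)
    rcases eq_or_lt_of_le hab with rfl | hlt
    · have htail : (εx - εy) * q
          = (gg q x a - gg q y a) + dd q x (a + 1) - dd q y (a + 1) := by
        have h3 := hE3 (a + 1) (by omega)
        have hs1 := gg_succ q x a
        have hs2 := gg_succ q y a
        linarith
      by_cases hpos : 0 ≤ gg q x a - gg q y a
      · left; intro i
        rcases lt_trichotomy i a with hi | rfl | hi
        · have := hE1 i hi; constructor <;> linarith
        · constructor <;> linarith [hE5]
        · have h3 := hE3 i (by omega)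
          rcases hεx with rfl | rfl <;> rcases hεy with rfl | rfl <;>
            constructor <;> linarith
      · push_neg at hpos
        right; intro i
        rcases lt_trichotomy i a with hi | rfl | hi
        · have := hE1 i hi; constructor <;> linarith
        · constructor <;> linarith [hE5]
        · have h3 := hE3 i (by omega)
          rcases hεx with rfl | rfl <;> rcases hεy with rfl | rfl <;>
            constructor <;> linarith
    · rcases hεx with rfl | rfl
      · right; intro i
        have bxi := dd_nonneg q hq x (i + 1); have bxi' := dd_lt q hq x (i + 1)
        have byb := dd_nonneg q hq y b; have byb' := dd_lt q hq y b
        rcases Nat.lt_or_ge i a with hi | hi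
        · have := hE1 i hi; constructor <;> linarith
        · rcases Nat.lt_or_ge i b with hib | hib
          · have := hE2 i hi hib; constructor <;> linarith
          · rcases Nat.eq_or_lt_of_le hib with rfl | hbi
            · have := hE4 hlt; constructor <;> linarith
            · have h3 := hE3 i (by omega)
              rcases hεy with rfl | rfl <;> constructor <;> linarith
      · left; intro i
        have bxi := dd_nonneg q hq x (i + 1); have bxi' := dd_lt q hq x (i + 1)
        have byb := dd_nonneg q hq y b; have byb' := dd_lt q hq y b
        rcases Nat.lt_or_ge i a with hi | hi
        · have := hE1 i hi; constructor <;> linarith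
        · rcases Nat.lt_or_ge i b with hib | hib
          · have := hE2 i hi hib; constructor <;> linarith
          · rcases Nat.eq_or_lt_of_le hib with rfl | hbi
            · have := hE4 hlt; constructor <;> linarith
            · have h3 := hE3 i (by omega)
              rcases hεy with rfl | rfl <;> constructor <;> linarith
  have bx0 := dd_nonneg q hq x 0; have bx0' := dd_lt q hq x 0
  have by0 := dd_nonneg q hq y 0; have by0' := dd_lt q hq y 0
  refine ⟨?_, ?_, ?_⟩
  · rcases key with h | h
    · left; intro i hi
      simp only [Finset.mem_Icc] at hi
      rw [gaccD q x (i - 1) (by omega), gaccD q y (i - 1) (by omega)]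
      exact Set.mem_Icc.mpr (h (i - 1))
    · right; intro i hi
      simp only [Finset.mem_Icc] at hi
      rw [gaccD q x (i - 1) (by omega), gaccD q y (i - 1) (by omega)]
      exact Set.mem_Icc.mpr (h (i - 1))
  · rw [gaccD q x 0 (by omega), gaccD q y 0 (by omega), abs_le]
    constructor <;> linarith
  · intro k
    have hVx : VT k (gacc q x) = ∑ i ∈ Finset.range n, ((i : ℤ) + 1) ^ k * gg q x i := by
      rw [VT]
      have hl : (gacc q x).length = n := by simp [gacc, hxn]
      rw [hl]
      exact Finset.sum_congr rfl fun i hi => by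
        rw [gaccD q x i (by simp at hi; omega)]
    have hVy : VT k (gacc q y) = ∑ i ∈ Finset.range n, ((i : ℤ) + 1) ^ k * gg q y i := by
      rw [VT]
      have hl : (gacc q y).length = n := by simp [gacc, hyn]
      rw [hl]
      exact Finset.sum_congr rfl fun i hi => by
        rw [gaccD q y i (by simp at hi; omega)]
    obtain ⟨m, rfl⟩ : ∃ m, n = m + 1 := ⟨n - 1, by omega⟩
    have hdiff : VT k (gacc q x) - VT k (gacc q y)
        = ∑ i ∈ Finset.range (m + 1), ((i : ℤ) + 1) ^ k * (gg q x i - gg q y i) := by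
      rw [hVx, hVy, ← Finset.sum_sub_distrib]
      exact Finset.sum_congr rfl fun i _ => by ring
    rcases key with h | h
    · obtain ⟨hge, hle⟩ := sum_bound q k m hq (fun i => gg q x i - gg q y i)
        (by simpa using (by linarith : gg q x 0 - gg q y 0 ≤ (q : ℤ) - 1)) h
      rw [hdiff, abs_le]
      constructor <;> linarith
    · obtain ⟨hge, hle⟩ := sum_bound q k m hq (fun i => gg q y i - gg q x i)
        (by simpa using (by linarith : gg q y 0 - gg q x 0 ≤ (q : ℤ) - 1))
        (fun i => ⟨by show (0 : ℤ) ≤ gg q y i - gg q x i; linarith [(h i).2],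
          by show gg q y i - gg q x i ≤ (q : ℤ); linarith [(h i).1]⟩)
      have hneg : ∑ i ∈ Finset.range (m + 1), ((i : ℤ) + 1) ^ k * (gg q y i - gg q x i)
          = -∑ i ∈ Finset.range (m + 1), ((i : ℤ) + 1) ^ k * (gg q x i - gg q y i) := by
        rw [← Finset.sum_neg_distrib]
        exact Finset.sum_congr rfl fun i _ => by ring
      rw [hdiff, abs_le]
      constructor <;> linarith [hneg, hge, hle]
end

section
/- Let s ≥ 0 be an integer. For each k ∈ [0, 2s], set n_k = (2s+1)·Σ_{i=1}^n i^k and fix a_k ∈ [0, n_k]. Then the code C_1 = { x ∈ Σ_2^n : VT^k(f(x)) ≡ a_k (mod n_k + 1) for every k ∈ [0, 2s] } is a binary single-deletion s-substitution correcting code, i.e., for any two distinct x, y ∈ C_1, B_{1,s}(x) ∩ B_{1,s}(y) = ∅. -/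
open Finset

section Stmt11Helpers
open Polynomial


lemma sublist_eraseIdx {α : Type*} : ∀ (x x1 : List α), x1.Sublist x → x1.length + 1 = x.length →
    ∃ p, p < x.length ∧ x1 = x.eraseIdx p := by
  intro x
  induction x with
  | nil => intro x1 h hl; simp at hl
  | cons a t ih =>
    intro x1 h hl
    cases h with
    | cons _ h' =>
      have : x1 = t := h'.eq_of_length (by simpa using hl)
      exact ⟨0, by simp, by simp [this]⟩
    | cons_cons _ h' =>
      rename_i t1
      have hl' : t1.length + 1 = t.length := by simpa using hl
      obtain ⟨p, hp, hpe⟩ := ih t1 h' hl'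
      exact ⟨p + 1, by simpa using hp, by simp [hpe]⟩

lemma getD_eraseIdx_lt (x : List ℕ) {p j : ℕ} (hp : p < x.length) (hj : j < p) :
    (x.eraseIdx p).getD j 0 = x.getD j 0 := by
  have hlen : (x.eraseIdx p).length = x.length - 1 := by
    rw [List.length_eraseIdx]; simp [hp]
  have h1 : j < (x.eraseIdx p).length := by omega
  have h2 : j < x.length := by omega
  rw [List.getD_eq_getElem _ _ h1, List.getD_eq_getElem _ _ h2]
  exact List.getElem_eraseIdx_of_lt h1 hj

lemma getD_eraseIdx_ge (x : List ℕ) {p j : ℕ} (hp : p < x.length) (hj : p ≤ j) :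
    (x.eraseIdx p).getD j 0 = x.getD (j + 1) 0 := by
  have hlen : (x.eraseIdx p).length = x.length - 1 := by
    rw [List.length_eraseIdx]; simp [hp]
  by_cases h : j < (x.eraseIdx p).length
  · rw [List.getD_eq_getElem _ _ h, List.getD_eq_getElem _ _ (by omega)]
    exact List.getElem_eraseIdx_of_ge h hj
  · rw [List.getD_eq_default _ _ (by omega), List.getD_eq_default _ _ (by omega)]

lemma ham_le_countP : ∀ (a b : List ℕ), a.length = b.length →
    #((Finset.range a.length).filter (fun j => a.getD j 0 ≠ b.getD j 0)) ≤
      (a.zip b).countP (fun p => p.1 != p.2) := by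
  intro a
  induction a with
  | nil => intro b h; simp
  | cons x t ih =>
    intro b h
    cases b with
    | nil => simp at h
    | cons y u =>
      have h' : t.length = u.length := by simpa using h
      rw [Finset.card_filter, List.length_cons, Finset.sum_range_succ']
      simp only [List.getD_cons_succ, List.getD_cons_zero]
      rw [List.zip_cons_cons, List.countP_cons]
      have h2 := ih u h'
      rw [Finset.card_filter] at h2
      have h3 : (if x ≠ y then 1 else 0) ≤ (if ((x, y).1 != (x, y).2) = true then 1 else 0) := by
        simp only [bne_iff_ne]; exact le_refl _
      exact add_le_add h2 h3

lemma icc_sum (n k : ℕ) : ∑ i ∈ Finset.Icc 1 n, (i : ℤ) ^ k = ∑ i ∈ Finset.range n, ((i : ℤ) + 1) ^ k := by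
  induction n with
  | zero => simp
  | succ n ih =>
    rw [Finset.sum_Icc_succ_top (by omega), ih, Finset.sum_range_succ]
    push_cast; ring

lemma sum_ite_lt (f : ℕ → ℤ) (m N : ℕ) (h : m ≤ N) :
    ∑ j ∈ Finset.range N, (if j < m then f j else 0) = ∑ j ∈ Finset.range m, f j := by
  rw [← Finset.sum_filter]
  congr 1
  ext j
  simp only [Finset.mem_filter, Finset.mem_range]
  omega

lemma VT_facc (x : List ℕ) (k : ℕ) :
    VT k (facc x) = ∑ i ∈ Finset.range x.length,
      ((i : ℤ) + 1) ^ k * ∑ j ∈ Finset.range (i + 1), (x.getD j 0 : ℤ) := by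
  unfold VT facc
  rw [List.length_map, List.length_range]
  refine Finset.sum_congr rfl fun i hi => ?_
  rw [Finset.mem_range] at hi
  congr 1
  rw [List.getD_eq_getElem _ _ (by simpa using hi)]
  simp


lemma polyKey (s n : ℕ) (u ε : ℕ → ℤ)
    (hε : ∀ i, ε i = 1 ∨ ε i = -1)
    (hsign : ∀ i < n, 0 ≤ ε i * u i)
    (hch : #((Finset.range (n - 1)).filter (fun r => ε r ≠ ε (r + 1))) ≤ 2 * s)
    (hmom : ∀ k ≤ 2 * s, ∑ i ∈ Finset.range n, ((i : ℤ) + 1) ^ k * u i = 0) :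
    ∀ i < n, u i = 0 := by
  classical
  set S : Finset ℕ := (Finset.range (n - 1)).filter (fun r => ε r ≠ ε (r + 1)) with hSdef
  set P : Polynomial ℤ :=
    Polynomial.C (ε 0 * (-1) ^ S.card) * ∏ r ∈ S, (Polynomial.C 2 * Polynomial.X - Polynomial.C (2 * (r : ℤ) + 3)) with hPdef
  have hdeg : P.natDegree < 2 * s + 1 := by
    have h1 : P.natDegree ≤ (∏ r ∈ S, (Polynomial.C 2 * Polynomial.X - Polynomial.C (2 * (r : ℤ) + 3))).natDegree :=
      Polynomial.natDegree_C_mul_le _ _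
    have h2 : (∏ r ∈ S, (Polynomial.C 2 * Polynomial.X - Polynomial.C (2 * (r : ℤ) + 3))).natDegree ≤
        ∑ r ∈ S, (Polynomial.C 2 * Polynomial.X - Polynomial.C (2 * (r : ℤ) + 3)).natDegree :=
      Polynomial.natDegree_prod_le _ _
    have h3 : ∀ r : ℕ, (Polynomial.C 2 * Polynomial.X - Polynomial.C (2 * (r : ℤ) + 3)).natDegree ≤ 1 := by
      intro r
      refine le_trans (Polynomial.natDegree_sub_le _ _) ?_
      rw [Polynomial.natDegree_C_mul_X (2 : ℤ) (by norm_num), Polynomial.natDegree_C]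
      simp
    have h4 : ∑ r ∈ S, (Polynomial.C 2 * Polynomial.X - Polynomial.C (2 * (r : ℤ) + 3)).natDegree ≤ S.card := by
      calc _ ≤ ∑ _r ∈ S, 1 := Finset.sum_le_sum fun r _ => h3 r
      _ = S.card := by simp
    omega
  have heval : ∀ m : ℤ, P.eval m = (ε 0 * (-1) ^ S.card) * ∏ r ∈ S, (2 * m - (2 * (r : ℤ) + 3)) := by
    intro m
    simp [hPdef, Polynomial.eval_prod]
  have hepsi : ∀ i < n, ε i = ε 0 * (-1) ^ (S.filter (· < i)).card := by
    intro i
    induction i with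
    | zero =>
      intro _
      have : S.filter (· < 0) = ∅ := by
        apply Finset.filter_false_of_mem; intro r _; omega
      simp [this]
    | succ i ihh =>
      intro hi
      have hi' : i < n := by omega
      have e1 := ihh hi'
      have hsplit : (S.filter (· < i + 1)).card = (S.filter (· < i)).card + (if i ∈ S then 1 else 0) := by
        rw [Finset.card_filter, Finset.card_filter]
        have hrepr : (if i ∈ S then (1 : ℕ) else 0) = ∑ r ∈ S, if r = i then 1 else 0 :=
          (Finset.sum_ite_eq' S i fun _ => (1 : ℕ)).symm
        rw [hrepr, ← Finset.sum_add_distrib]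
        refine Finset.sum_congr rfl fun r _ => ?_
        split_ifs <;> omega
      by_cases hin : i ∈ S
      · have hne : ε i ≠ ε (i + 1) := (Finset.mem_filter.mp hin).2
        have h5 : ε (i + 1) = -ε i := by
          rcases hε i with h1 | h1 <;> rcases hε (i + 1) with h2 | h2 <;> omega
        rw [h5, e1, hsplit, if_pos hin, pow_add]
        ring
      · have h5 : ε (i + 1) = ε i := by
          by_contra hne
          exact hin (Finset.mem_filter.mpr ⟨Finset.mem_range.mpr (by omega), Ne.symm hne⟩)
        rw [h5, e1, hsplit, if_neg hin, add_zero]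
  have hε2 : ∀ i, ε i * ε i = 1 := by
    intro i; rcases hε i with h | h <;> rw [h] <;> ring
  have hpos : ∀ i < n, 0 < ε i * P.eval ((i : ℤ) + 1) := by
    intro i hi
    rw [heval, hepsi i hi]
    rw [← Finset.prod_filter_mul_prod_filter_not S (· < i)]
    have h1 : 0 < ∏ r ∈ S.filter (· < i), (2 * ((i : ℤ) + 1) - (2 * (r : ℤ) + 3)) := by
      apply Finset.prod_pos
      intro r hr
      have : r < i := (Finset.mem_filter.mp hr).2
      have : (r : ℤ) < i := by exact_mod_cast this
      linarith
    have h2 : ∏ r ∈ S.filter (fun r => ¬ r < i), (2 * ((i : ℤ) + 1) - (2 * (r : ℤ) + 3)) =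
        (-1) ^ (S.filter (fun r => ¬ r < i)).card *
          ∏ r ∈ S.filter (fun r => ¬ r < i), ((2 * (r : ℤ) + 3) - 2 * ((i : ℤ) + 1)) := by
      rw [← Finset.prod_const, ← Finset.prod_mul_distrib]
      refine Finset.prod_congr rfl fun r _ => ?_
      ring
    have h3 : 0 < ∏ r ∈ S.filter (fun r => ¬ r < i), ((2 * (r : ℤ) + 3) - 2 * ((i : ℤ) + 1)) := by
      apply Finset.prod_pos
      intro r hr
      have : ¬ r < i := (Finset.mem_filter.mp hr).2
      have : (i : ℤ) ≤ r := by exact_mod_cast Nat.le_of_not_lt this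
      linarith
    have hcards : (S.filter (· < i)).card + (S.filter (fun r => ¬ r < i)).card = S.card :=
      Finset.card_filter_add_card_filter_not _
    rw [h2]
    set c1 := (S.filter (· < i)).card
    set c2 := (S.filter (fun r => ¬ r < i)).card
    set A := ∏ r ∈ S.filter (· < i), (2 * ((i : ℤ) + 1) - (2 * (r : ℤ) + 3))
    set B := ∏ r ∈ S.filter (fun r => ¬ r < i), ((2 * (r : ℤ) + 3) - 2 * ((i : ℤ) + 1))
    have key : ε 0 * (-1) ^ c1 * (ε 0 * (-1) ^ S.card * (A * ((-1) ^ c2 * B))) =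
        (ε 0 * ε 0) * ((-1) ^ (c1 + S.card + c2)) * (A * B) := by
      rw [pow_add, pow_add]; ring
    rw [key, hε2 0, one_mul]
    have : c1 + S.card + c2 = 2 * S.card := by omega
    rw [this, pow_mul]
    norm_num
    exact mul_pos h1 h3
  have hzero : ∑ i ∈ Finset.range n, P.eval ((i : ℤ) + 1) * u i = 0 := by
    have hev : ∀ i : ℕ, P.eval ((i : ℤ) + 1) = ∑ k ∈ Finset.range (2 * s + 1), P.coeff k * ((i : ℤ) + 1) ^ k :=
      fun i => Polynomial.eval_eq_sum_range' hdeg _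
    calc ∑ i ∈ Finset.range n, P.eval ((i : ℤ) + 1) * u i
        = ∑ i ∈ Finset.range n, ∑ k ∈ Finset.range (2 * s + 1), P.coeff k * (((i : ℤ) + 1) ^ k * u i) := by
          refine Finset.sum_congr rfl fun i _ => ?_
          rw [hev i, Finset.sum_mul]
          refine Finset.sum_congr rfl fun k _ => by ring
      _ = ∑ k ∈ Finset.range (2 * s + 1), P.coeff k * ∑ i ∈ Finset.range n, ((i : ℤ) + 1) ^ k * u i := by
          rw [Finset.sum_comm]
          refine Finset.sum_congr rfl fun k _ => ?_
          rw [Finset.mul_sum]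
      _ = 0 := by
          refine Finset.sum_eq_zero fun k hk => ?_
          rw [hmom k (by rw [Finset.mem_range] at hk; omega), mul_zero]
  have hterm : ∀ i ∈ Finset.range n, 0 ≤ P.eval ((i : ℤ) + 1) * u i := by
    intro i hi
    rw [Finset.mem_range] at hi
    have h1 := (hpos i hi).le
    have h2 := hsign i hi
    have h3 := mul_nonneg h1 h2
    have h4 : (ε i * P.eval ((i : ℤ) + 1)) * (ε i * u i) = (ε i * ε i) * (P.eval ((i : ℤ) + 1) * u i) := by ring
    rw [h4, hε2 i, one_mul] at h3
    exact h3
  intro i hi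
  have hall := (Finset.sum_eq_zero_iff_of_nonneg hterm).mp hzero i (Finset.mem_range.mpr hi)
  rcases mul_eq_zero.mp hall with h | h
  · exfalso
    have := hpos i hi
    rw [h, mul_zero] at this
    exact lt_irrefl _ this
  · exact h

lemma binaryD {l : List ℕ} (h2 : ∀ b ∈ l, b < 2) (j : ℕ) :
    0 ≤ (l.getD j 0 : ℤ) ∧ (l.getD j 0 : ℤ) ≤ 1 := by
  constructor
  · positivity
  · by_cases h : j < l.length
    · rw [List.getD_eq_getElem _ _ h]
      have := h2 _ (List.getElem_mem h)
      exact_mod_cast Nat.lt_succ_iff.mp this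
    · rw [List.getD_eq_default _ _ (by omega)]; norm_num

lemma auxMain (n s p q : ℕ) (x y : List ℕ)
    (hxl : x.length = n) (hyl : y.length = n)
    (hx2 : ∀ b ∈ x, b < 2) (hy2 : ∀ b ∈ y, b < 2)
    (hpn : p < n) (hqn : q < n) (hpq : p ≤ q)
    (hham : #((Finset.range (n - 1)).filter
        (fun j => (x.eraseIdx p).getD j 0 ≠ (y.eraseIdx q).getD j 0)) ≤ 2 * s)
    (hmod : ∀ k ≤ 2 * s, VT k (facc x) ≡ VT k (facc y)
        [ZMOD ((2 * s + 1) * ∑ i ∈ Finset.Icc 1 n, (i : ℤ) ^ k + 1)]) :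
    x = y := by
  classical
  set X : ℕ → ℤ := fun j => (x.getD j 0 : ℤ) with hXdef
  set Y : ℕ → ℤ := fun j => (y.getD j 0 : ℤ) with hYdef
  set X1 : ℕ → ℤ := fun j => ((x.eraseIdx p).getD j 0 : ℤ) with hX1def
  set Y1 : ℕ → ℤ := fun j => ((y.eraseIdx q).getD j 0 : ℤ) with hY1def
  set e : ℕ → ℤ := fun j => X1 j - Y1 j with hedef
  set u : ℕ → ℤ := fun i => (∑ j ∈ Finset.range (i + 1), X j) - ∑ j ∈ Finset.range (i + 1), Y j with hudef
  set σf : ℕ → ℕ := fun j => if j < p then j else j + 1 with hσdef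
  set base : ℕ → ℤ := fun i => ∑ j ∈ Finset.range (n - 1), e j * (if σf j ≤ i then 1 else 0) with hbdef
  set δ : ℤ := X p with hδdef
  have hpx : p < x.length := by omega
  have hqy : q < y.length := by omega
  have hX01 : ∀ j, 0 ≤ X j ∧ X j ≤ 1 := binaryD hx2
  have hY01 : ∀ j, 0 ≤ Y j ∧ Y j ≤ 1 := binaryD hy2
  have hX1b : ∀ b ∈ x.eraseIdx p, b < 2 := fun b hb => hx2 b ((x.eraseIdx_sublist p).subset hb)
  have hY1b : ∀ b ∈ y.eraseIdx q, b < 2 := fun b hb => hy2 b ((y.eraseIdx_sublist q).subset hb)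
  have hX101 : ∀ j, 0 ≤ X1 j ∧ X1 j ≤ 1 := binaryD hX1b
  have hY101 : ∀ j, 0 ≤ Y1 j ∧ Y1 j ≤ 1 := binaryD hY1b
  have hX1lt : ∀ j < p, X1 j = X j := fun j hj =>
    congrArg (fun t : ℕ => (t : ℤ)) (getD_eraseIdx_lt x hpx hj)
  have hX1ge : ∀ j, p ≤ j → X1 j = X (j + 1) := fun j hj =>
    congrArg (fun t : ℕ => (t : ℤ)) (getD_eraseIdx_ge x hpx hj)
  have hY1lt : ∀ j < q, Y1 j = Y j := fun j hj =>
    congrArg (fun t : ℕ => (t : ℤ)) (getD_eraseIdx_lt y hqy hj)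
  have hY1ge : ∀ j, q ≤ j → Y1 j = Y (j + 1) := fun j hj =>
    congrArg (fun t : ℕ => (t : ℤ)) (getD_eraseIdx_ge y hqy hj)
  have hsum_e : ∀ m : ℕ, ∑ j ∈ Finset.range m, e j =
      (∑ j ∈ Finset.range m, X1 j) - ∑ j ∈ Finset.range m, Y1 j := by
    intro m; simp only [hedef]; rw [Finset.sum_sub_distrib]
  -- partial sums
  have P1x : ∀ i ≤ p, ∑ j ∈ Finset.range i, X j = ∑ j ∈ Finset.range i, X1 j :=
    fun i hi => Finset.sum_congr rfl fun j hj => (hX1lt j (by rw [Finset.mem_range] at hj; omega)).symm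
  have P1y : ∀ i ≤ q, ∑ j ∈ Finset.range i, Y j = ∑ j ∈ Finset.range i, Y1 j :=
    fun i hi => Finset.sum_congr rfl fun j hj => (hY1lt j (by rw [Finset.mem_range] at hj; omega)).symm
  have P2x : ∀ i, p ≤ i → ∑ j ∈ Finset.range (i + 1), X j = X p + ∑ j ∈ Finset.range i, X1 j := by
    intro i hi
    induction i, hi using Nat.le_induction with
    | base => rw [Finset.sum_range_succ, P1x p le_rfl]; ring
    | succ i hi ih =>
      rw [Finset.sum_range_succ, ih, Finset.sum_range_succ, ← hX1ge i hi]
      ring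
  have P2y : ∀ i, q ≤ i → ∑ j ∈ Finset.range (i + 1), Y j = Y q + ∑ j ∈ Finset.range i, Y1 j := by
    intro i hi
    induction i, hi using Nat.le_induction with
    | base => rw [Finset.sum_range_succ, P1y q le_rfl]; ring
    | succ i hi ih =>
      rw [Finset.sum_range_succ, ih, Finset.sum_range_succ, ← hY1ge i hi]
      ring
  -- base formulas
  have hbase_lt : ∀ i < p, base i = ∑ j ∈ Finset.range (i + 1), e j := by
    intro i hi
    rw [hbdef, ← sum_ite_lt e (i + 1) (n - 1) (by omega)]
    refine Finset.sum_congr rfl fun j _ => ?_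
    simp only [hσdef]
    split_ifs <;> (try ring) <;> omega
  have hbase_ge : ∀ i, p ≤ i → i ≤ n - 1 → base i = ∑ j ∈ Finset.range i, e j := by
    intro i hi hi'
    rw [hbdef, ← sum_ite_lt e i (n - 1) hi']
    refine Finset.sum_congr rfl fun j _ => ?_
    simp only [hσdef]
    split_ifs <;> (try ring) <;> omega
  -- key bounds on u
  have hδ01 : 0 ≤ δ ∧ δ ≤ 1 := hX01 p
  have hu : ∀ i < n, base i + (δ - 1) ≤ u i ∧ u i ≤ base i + δ := by
    intro i hi
    rcases lt_or_ge i p with h | h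
    · have h1 : ∑ j ∈ Finset.range (i + 1), X j = ∑ j ∈ Finset.range (i + 1), X1 j := P1x (i + 1) (by omega)
      have h2 : ∑ j ∈ Finset.range (i + 1), Y j = ∑ j ∈ Finset.range (i + 1), Y1 j := P1y (i + 1) (by omega)
      have h3 : u i = base i := by
        simp only [hudef]
        rw [h1, h2, hbase_lt i h, hsum_e]
      rw [h3]
      constructor <;> [linarith [hδ01.2]; linarith [hδ01.1]]
    rcases lt_or_ge i q with h2 | h2
    · have h1 : ∑ j ∈ Finset.range (i + 1), X j = X p + ∑ j ∈ Finset.range i, X1 j := P2x i h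
      have h3 : ∑ j ∈ Finset.range (i + 1), Y j = ∑ j ∈ Finset.range (i + 1), Y1 j := P1y (i + 1) (by omega)
      have h4 : u i = base i + (δ - Y1 i) := by
        simp only [hudef]
        rw [h1, h3, Finset.sum_range_succ, hbase_ge i h (by omega), hsum_e, hδdef]
        ring
      rw [h4]
      have := hY101 i
      constructor <;> linarith [this.1, this.2]
    · have h1 : ∑ j ∈ Finset.range (i + 1), X j = X p + ∑ j ∈ Finset.range i, X1 j := P2x i h
      have h3 : ∑ j ∈ Finset.range (i + 1), Y j = Y q + ∑ j ∈ Finset.range i, Y1 j := P2y i h2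
      have h4 : u i = base i + (δ - Y q) := by
        simp only [hudef]
        rw [h1, h3, hbase_ge i h (by omega), hsum_e, hδdef]
        ring
      rw [h4]
      have := hY01 q
      constructor <;> linarith [this.1, this.2]
  -- e bound
  have heabs : ∑ j ∈ Finset.range (n - 1), |e j| ≤ 2 * (s : ℤ) := by
    have h1 : ∀ j, |e j| ≤ (if (x.eraseIdx p).getD j 0 ≠ (y.eraseIdx q).getD j 0 then (1 : ℤ) else 0) := by
      intro j
      split_ifs with h
      · have a1 := hX101 j; have a2 := hY101 j
        rw [abs_le]; constructor <;> simp only [hedef] <;> linarith [a1.1, a1.2, a2.1, a2.2]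
      · push_neg at h
        have : e j = 0 := by simp only [hedef, hX1def, hY1def, h, sub_self]
        simp [this]
    calc ∑ j ∈ Finset.range (n - 1), |e j|
        ≤ ∑ j ∈ Finset.range (n - 1), (if (x.eraseIdx p).getD j 0 ≠ (y.eraseIdx q).getD j 0 then (1 : ℤ) else 0) :=
          Finset.sum_le_sum fun j _ => h1 j
      _ = (#((Finset.range (n - 1)).filter
            (fun j => (x.eraseIdx p).getD j 0 ≠ (y.eraseIdx q).getD j 0)) : ℤ) := by
          rw [Finset.card_filter]; push_cast; rfl
      _ ≤ 2 * (s : ℤ) := by exact_mod_cast hham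
  -- moments vanish
  have hmom : ∀ k ≤ 2 * s, ∑ i ∈ Finset.range n, ((i : ℤ) + 1) ^ k * u i = 0 := by
    intro k hk
    set S : ℤ := ∑ i ∈ Finset.range n, ((i : ℤ) + 1) ^ k with hSdef
    have hS0 : 0 ≤ S := Finset.sum_nonneg fun i _ => by positivity
    have hpow : ∀ i : ℕ, (0 : ℤ) ≤ ((i : ℤ) + 1) ^ k := fun i => by positivity
    set T : ℕ → ℤ := fun j => ∑ i ∈ Finset.range n, ((i : ℤ) + 1) ^ k * (if σf j ≤ i then 1 else 0) with hTdef
    have hT : ∀ j, 0 ≤ T j ∧ T j ≤ S := by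
      intro j
      constructor
      · exact Finset.sum_nonneg fun i _ => by positivity
      · refine Finset.sum_le_sum fun i _ => ?_
        split_ifs <;> simp [hpow i]
    have hbs : ∑ i ∈ Finset.range n, ((i : ℤ) + 1) ^ k * base i = ∑ j ∈ Finset.range (n - 1), e j * T j := by
      simp only [hbdef, hTdef, Finset.mul_sum]
      rw [Finset.sum_comm]
      exact Finset.sum_congr rfl fun j _ => Finset.sum_congr rfl fun i _ => by ring
    have habs : |∑ i ∈ Finset.range n, ((i : ℤ) + 1) ^ k * base i| ≤ 2 * s * S := by
      rw [hbs]
      calc |∑ j ∈ Finset.range (n - 1), e j * T j|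
          ≤ ∑ j ∈ Finset.range (n - 1), |e j * T j| := Finset.abs_sum_le_sum_abs _ _
        _ ≤ ∑ j ∈ Finset.range (n - 1), |e j| * S := by
            refine Finset.sum_le_sum fun j _ => ?_
            rw [abs_mul, abs_of_nonneg (hT j).1]
            exact mul_le_mul_of_nonneg_left (hT j).2 (abs_nonneg _)
        _ = (∑ j ∈ Finset.range (n - 1), |e j|) * S := by rw [Finset.sum_mul]
        _ ≤ 2 * s * S := mul_le_mul_of_nonneg_right heabs hS0
    have hup : ∑ i ∈ Finset.range n, ((i : ℤ) + 1) ^ k * u i ≤ (2 * s + 1) * S := by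
      calc ∑ i ∈ Finset.range n, ((i : ℤ) + 1) ^ k * u i
          ≤ ∑ i ∈ Finset.range n, ((i : ℤ) + 1) ^ k * (base i + δ) := by
            refine Finset.sum_le_sum fun i hi => ?_
            exact mul_le_mul_of_nonneg_left (hu i (Finset.mem_range.mp hi)).2 (hpow i)
        _ = ∑ i ∈ Finset.range n, ((i : ℤ) + 1) ^ k * base i + δ * S := by
            rw [hSdef, Finset.mul_sum, ← Finset.sum_add_distrib]
            refine Finset.sum_congr rfl fun i _ => by ring
        _ ≤ (2 * s + 1) * S := by
            have := (abs_le.mp habs).2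
            have hδS : δ * S ≤ 1 * S := mul_le_mul_of_nonneg_right hδ01.2 hS0
            linarith
    have hlow : -((2 * s + 1) * S) ≤ ∑ i ∈ Finset.range n, ((i : ℤ) + 1) ^ k * u i := by
      calc -((2 * s + 1) * S) ≤ ∑ i ∈ Finset.range n, ((i : ℤ) + 1) ^ k * base i + (δ - 1) * S := by
            have := (abs_le.mp habs).1
            have hδS : (-1 : ℤ) * S ≤ (δ - 1) * S :=
              mul_le_mul_of_nonneg_right (by linarith [hδ01.1]) hS0
            linarith
        _ = ∑ i ∈ Finset.range n, ((i : ℤ) + 1) ^ k * (base i + (δ - 1)) := by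
            rw [hSdef, Finset.mul_sum, ← Finset.sum_add_distrib]
            refine Finset.sum_congr rfl fun i _ => by ring
        _ ≤ ∑ i ∈ Finset.range n, ((i : ℤ) + 1) ^ k * u i := by
            refine Finset.sum_le_sum fun i hi => ?_
            exact mul_le_mul_of_nonneg_left (hu i (Finset.mem_range.mp hi)).1 (hpow i)
    have hdvd : ((2 * s + 1) * S + 1) ∣ ∑ i ∈ Finset.range n, ((i : ℤ) + 1) ^ k * u i := by
      have h0 := (hmod k hk).dvd
      rw [icc_sum n k, ← hSdef] at h0
      have hVTd : VT k (facc y) - VT k (facc x) = -(∑ i ∈ Finset.range n, ((i : ℤ) + 1) ^ k * u i) := by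
        rw [VT_facc, VT_facc, hxl, hyl, hudef, ← Finset.sum_sub_distrib, ← Finset.sum_neg_distrib]
        refine Finset.sum_congr rfl fun i _ => by ring
      rw [hVTd] at h0
      exact (dvd_neg.mp h0)
    have hlt : |∑ i ∈ Finset.range n, ((i : ℤ) + 1) ^ k * u i| < (2 * s + 1) * S + 1 := by
      rw [abs_lt]; constructor <;> linarith
    exact Int.eq_zero_of_abs_lt_dvd hdvd hlt
  -- sign structure
  set ε : ℕ → ℤ := fun i => if 0 < base i + δ then 1 else -1 with hεdef
  have hε : ∀ i, ε i = 1 ∨ ε i = -1 := by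
    intro i; simp only [hεdef]; split_ifs <;> simp
  have hsign : ∀ i < n, 0 ≤ ε i * u i := by
    intro i hi
    have := hu i hi
    simp only [hεdef]
    split_ifs with h
    · nlinarith [this.1]
    · push_neg at h; nlinarith [this.2]
  have hch : #((Finset.range (n - 1)).filter (fun r => ε r ≠ ε (r + 1))) ≤ 2 * s := by
    set D : Finset ℕ := (Finset.range (n - 1)).filter (fun j => e j ≠ 0) with hDdef
    have hDcard : D.card ≤ 2 * s := by
      have : D = (Finset.range (n - 1)).filter
          (fun j => (x.eraseIdx p).getD j 0 ≠ (y.eraseIdx q).getD j 0) := by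
        refine Finset.filter_congr fun j _ => ?_
        simp only [hedef, hX1def, hY1def, sub_ne_zero, ne_eq, Nat.cast_inj]
      rw [this]; exact hham
    have hsub : (Finset.range (n - 1)).filter (fun r => ε r ≠ ε (r + 1)) ⊆
        D.image (fun j => σf j - 1) := by
      intro r hr
      rw [Finset.mem_filter, Finset.mem_range] at hr
      obtain ⟨hrn, hrne⟩ := hr
      have hbne : base r ≠ base (r + 1) := by
        intro hb
        apply hrne
        simp only [hεdef, hb]
      have hex : ∃ j ∈ Finset.range (n - 1), e j ≠ 0 ∧ σf j = r + 1 := by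
        by_contra hno
        push_neg at hno
        apply hbne
        simp only [hbdef]
        refine Finset.sum_congr rfl fun j hj => ?_
        rcases eq_or_ne (e j) 0 with h0 | h0
        · rw [h0]; ring
        · have hσ : σf j ≠ r + 1 := hno j hj h0
          have : (σf j ≤ r) ↔ (σf j ≤ r + 1) := by omega
          rw [if_congr this rfl rfl]
      obtain ⟨j, hj1, hj2, hj3⟩ := hex
      refine Finset.mem_image.mpr ⟨j, Finset.mem_filter.mpr ⟨hj1, hj2⟩, by omega⟩
    calc #((Finset.range (n - 1)).filter (fun r => ε r ≠ ε (r + 1)))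
        ≤ #(D.image (fun j => σf j - 1)) := Finset.card_le_card hsub
      _ ≤ D.card := Finset.card_image_le
      _ ≤ 2 * s := hDcard
  have huz : ∀ i < n, u i = 0 := polyKey s n u ε hε hsign hch hmom
  -- conclude x = y
  have hXY : ∀ i < n, X i = Y i := by
    intro i hi
    cases i with
    | zero =>
      have h0 := huz 0 hi
      simp only [hudef, zero_add, Finset.sum_range_one] at h0
      linarith
    | succ i =>
      have h0 := huz (i + 1) hi
      have h1 := huz i (by omega)
      simp only [hudef, Finset.sum_range_succ] at h0 h1
      linarith
  refine List.ext_getElem (by omega) fun i h1 h2 => ?_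
  have := hXY i (by omega)
  simp only [hXdef, hYdef] at this
  rw [List.getD_eq_getElem _ _ h1, List.getD_eq_getElem _ _ h2] at this
  exact_mod_cast this

end Stmt11Helpers

/-- Theorem 3. For `a_k ∈ [0, n_k]` with
`n_k = (2s+1) ∑_{i=1}^n i^k`, the code
`C_1 = {x ∈ Σ_2^n : VT^k(f(x)) ≡ a_k (mod n_k + 1) for all k ∈ [0, 2s]}`
is a binary single-deletion `s`-substitution correcting code. -/
theorem stmt11 (n s : ℕ) (a : ℕ → ℤ)
    (ha : ∀ k ≤ 2 * s,
      a k ∈ Set.Icc 0 ((2 * s + 1) * ∑ i ∈ Finset.Icc 1 n, (i : ℤ) ^ k)) :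
    ∀ x y : List ℕ,
      x.length = n → (∀ b ∈ x, b < 2) →
      (∀ k ≤ 2 * s, VT k (facc x) ≡ a k
        [ZMOD ((2 * s + 1) * ∑ i ∈ Finset.Icc 1 n, (i : ℤ) ^ k + 1)]) →
      y.length = n → (∀ b ∈ y, b < 2) →
      (∀ k ≤ 2 * s, VT k (facc y) ≡ a k
        [ZMOD ((2 * s + 1) * ∑ i ∈ Finset.Icc 1 n, (i : ℤ) ^ k + 1)]) →
      x ≠ y → ball 2 1 s x ∩ ball 2 1 s y = ∅ := by
  intro x y hxl hx2 hx hyl hy2 hy hxy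
  rw [Set.eq_empty_iff_forall_notMem]
  rintro z ⟨⟨x1, ⟨hx1s, hx1l⟩, hzx⟩, y1, ⟨hy1s, hy1l⟩, hzy⟩
  obtain ⟨hzlx, _hz2x, hcx⟩ := hzx
  obtain ⟨hzly, _hz2y, hcy⟩ := hzy
  obtain ⟨p, hp, hpe⟩ := sublist_eraseIdx x x1 hx1s hx1l
  obtain ⟨q, hq, hqe⟩ := sublist_eraseIdx y y1 hy1s hy1l
  have hx1len : x1.length = n - 1 := by omega
  have hy1len : y1.length = n - 1 := by omega
  have h1 : #((Finset.range (n - 1)).filter (fun j => x1.getD j 0 ≠ z.getD j 0)) ≤ s := by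
    have h := ham_le_countP x1 z hzlx.symm
    rw [hx1len] at h
    exact h.trans hcx
  have h2 : #((Finset.range (n - 1)).filter (fun j => y1.getD j 0 ≠ z.getD j 0)) ≤ s := by
    have h := ham_le_countP y1 z hzly.symm
    rw [hy1len] at h
    exact h.trans hcy
  have hham0 : #((Finset.range (n - 1)).filter (fun j => x1.getD j 0 ≠ y1.getD j 0)) ≤ 2 * s := by
    classical
    have hsub : (Finset.range (n - 1)).filter (fun j => x1.getD j 0 ≠ y1.getD j 0) ⊆
        (Finset.range (n - 1)).filter (fun j => x1.getD j 0 ≠ z.getD j 0) ∪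
          (Finset.range (n - 1)).filter (fun j => y1.getD j 0 ≠ z.getD j 0) := by
      intro j hj
      rw [Finset.mem_filter] at hj
      rw [Finset.mem_union, Finset.mem_filter, Finset.mem_filter]
      by_cases h : x1.getD j 0 = z.getD j 0
      · right; exact ⟨hj.1, fun hh => hj.2 (h.trans hh.symm)⟩
      · left; exact ⟨hj.1, h⟩
    calc #((Finset.range (n - 1)).filter (fun j => x1.getD j 0 ≠ y1.getD j 0))
        ≤ #((Finset.range (n - 1)).filter (fun j => x1.getD j 0 ≠ z.getD j 0) ∪
            (Finset.range (n - 1)).filter (fun j => y1.getD j 0 ≠ z.getD j 0)) :=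
          Finset.card_le_card hsub
      _ ≤ #((Finset.range (n - 1)).filter (fun j => x1.getD j 0 ≠ z.getD j 0)) +
            #((Finset.range (n - 1)).filter (fun j => y1.getD j 0 ≠ z.getD j 0)) :=
          Finset.card_union_le _ _
      _ ≤ 2 * s := by omega
  have hmods : ∀ k ≤ 2 * s, VT k (facc x) ≡ VT k (facc y)
      [ZMOD ((2 * s + 1) * ∑ i ∈ Finset.Icc 1 n, (i : ℤ) ^ k + 1)] :=
    fun k hk => (hx k hk).trans (hy k hk).symm
  rcases le_total p q with hpq | hpq
  · apply hxy
    refine auxMain n s p q x y hxl hyl hx2 hy2 (by omega) (by omega) hpq ?_ hmods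
    rw [← hpe, ← hqe]
    exact hham0
  · apply hxy
    refine (auxMain n s q p y x hyl hxl hy2 hx2 (by omega) (by omega) hpq ?_
      (fun k hk => (hmods k hk).symm)).symm
    rw [← hqe, ← hpe]
    classical
    have hcomm : ((Finset.range (n - 1)).filter (fun j => y1.getD j 0 ≠ x1.getD j 0)) =
        ((Finset.range (n - 1)).filter (fun j => x1.getD j 0 ≠ y1.getD j 0)) := by
      apply Finset.filter_congr
      intro j _
      exact ne_comm
    rw [hcomm]
    exact hham0
end

section
/- Let t ≥ 1 be an integer and let x, y ∈ Σ_2^n be distinct binary sequences that are both t-good and satisfy D_t(x) ∩ D_t(y) ≠ ∅. Then either f(x)_i − f(y)_i ∈ {0, 1} for all i ∈ [1, n], or f(x)_i − f(y)_i ∈ {−1, 0} for all i ∈ [1, n]. -/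
open Finset

namespace Stmt16Aux

def S (X : ℕ → ℕ) (k l : ℕ) : ℤ := ∑ m ∈ Finset.Ico k l, (X m : ℤ)

lemma S_nonneg (X : ℕ → ℕ) (k l : ℕ) : 0 ≤ S X k l :=
  Finset.sum_nonneg fun m _ => by positivity

lemma S_split (X : ℕ → ℕ) {k l m : ℕ} (h1 : k ≤ l) (h2 : l ≤ m) :
    S X k m = S X k l + S X l m := (Finset.sum_Ico_consecutive _ h1 h2).symm

lemma S_mono (X : ℕ → ℕ) {k l m : ℕ} (h1 : k ≤ l) (h2 : l ≤ m) :
    S X k l ≤ S X k m := by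
  rw [S_split X h1 h2]; have := S_nonneg X l m; omega

lemma S_congr {X Y : ℕ → ℕ} {k l : ℕ} (h : ∀ m, k ≤ m → m < l → X m = Y m) :
    S X k l = S Y k l := by
  refine Finset.sum_congr rfl fun m hm => ?_
  rw [Finset.mem_Ico] at hm
  rw [h m hm.1 hm.2]

lemma S_shift (X : ℕ → ℕ) (c k l : ℕ) :
    S X (k + c) (l + c) = S (fun m => X (m + c)) k l := by
  unfold S
  rw [← Finset.sum_Ico_add' (fun m => (X m : ℤ)) k l c]

lemma S_pos_elim {X : ℕ → ℕ} {k l : ℕ} (h : 1 ≤ S X k l) :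
    ∃ m, k ≤ m ∧ m < l ∧ 1 ≤ X m := by
  by_contra hc
  push_neg at hc
  have : S X k l = 0 := by
    refine Finset.sum_eq_zero fun m hm => ?_
    rw [Finset.mem_Ico] at hm
    have := hc m hm.1 hm.2
    omega
  omega

lemma S_single_le {X : ℕ → ℕ} {k l p : ℕ} (h1 : k ≤ p) (h2 : p < l) :
    (X p : ℤ) ≤ S X k l :=
  Finset.single_le_sum (f := fun m => (X m : ℤ)) (fun m _ => by positivity)
    (Finset.mem_Ico.mpr ⟨h1, h2⟩)

lemma S_pair_le {X : ℕ → ℕ} {k l p q : ℕ} (hpq : p < q) (h1 : k ≤ p) (h2 : q < l) :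
    (X p : ℤ) + X q ≤ S X k l := by
  have hsub : ({p, q} : Finset ℕ) ⊆ Finset.Ico k l := by
    intro m hm
    simp only [Finset.mem_insert, Finset.mem_singleton] at hm
    rw [Finset.mem_Ico]
    rcases hm with rfl | rfl <;> omega
  have := Finset.sum_le_sum_of_subset_of_nonneg (f := fun m => (X m : ℤ)) hsub
    (fun m _ _ => by positivity)
  rwa [Finset.sum_pair hpq.ne] at this

lemma core (t c i j : ℕ) (X Y : ℕ → ℕ) (hc : 1 ≤ c) (hct : c ≤ t) (hij : i ≤ j)
    (Wx : ∀ k l, l ≤ k + t → S X k l ≤ 1) (Wy : ∀ k l, l ≤ k + t → S Y k l ≤ 1)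
    (h1 : ∀ m, m < i → X m = Y m)
    (h2 : ∀ m, i ≤ m → m < j → X (m + c) = Y m)
    (h3 : ∀ m, j ≤ m → X (m + c) = Y (m + c)) :
    (∀ k, 0 ≤ S X 0 k - S Y 0 k ∧ S X 0 k - S Y 0 k ≤ 1) ∨
    (∀ k, -1 ≤ S X 0 k - S Y 0 k ∧ S X 0 k - S Y 0 k ≤ 0) := by
  -- the number of ones of X in the deleted window [i, i+c)
  set a : ℤ := S X i (i + c) with ha
  have ha0 : 0 ≤ a := S_nonneg X i (i + c)
  have ha1 : a ≤ 1 := Wx i (i + c) (by omega)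
  -- before the window everything agrees
  have f0 : ∀ k, k ≤ i → S X 0 k = S Y 0 k := fun k hk =>
    S_congr fun m _ hmk => h1 m (lt_of_lt_of_le hmk hk)
  have fi : ∀ k, i ≤ k → S X 0 k - S Y 0 k = S X i k - S Y i k := by
    intro k hk
    rw [S_split X (Nat.zero_le i) hk, S_split Y (Nat.zero_le i) hk, f0 i le_rfl]
    ring
  -- region i ≤ k ≤ j
  have r1 : ∀ k, i ≤ k → k ≤ j → S X 0 k - S Y 0 k = a - S X k (k + c) := by
    intro k hik hkj
    have e1 : S Y i k = S X (i + c) (k + c) := by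
      rw [S_shift X c i k]
      exact (S_congr fun m hm1 hm2 => h2 m hm1 (lt_of_lt_of_le hm2 hkj)).symm
    have e2 : S X i (k + c) = S X i k + S X k (k + c) :=
      S_split X hik (by omega)
    have e3 : S X i (k + c) = a + S X (i + c) (k + c) := by
      rw [ha]; exact S_split X (by omega) (by omega)
    have e4 := fi k hik
    omega
  -- region i + c ≤ k ≤ j + c, parametrized as k = m + c
  have r2 : ∀ m, i ≤ m → m ≤ j → S X 0 (m + c) - S Y 0 (m + c) = a - S Y m (m + c) := by
    intro m him hmj
    have e1 : S X (i + c) (m + c) = S Y i m := by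
      rw [S_shift X c i m]
      exact S_congr fun p hp1 hp2 => h2 p hp1 (lt_of_lt_of_le hp2 hmj)
    have e2 : S X i (m + c) = a + S X (i + c) (m + c) := by
      rw [ha]; exact S_split X (by omega) (by omega)
    have e3 : S Y i (m + c) = S Y i m + S Y m (m + c) :=
      S_split Y him (by omega)
    have e4 := fi (m + c) (by omega)
    omega
  -- the tail is constant
  have r3 : ∀ k, j + c ≤ k →
      S X 0 k - S Y 0 k = S X 0 (j + c) - S Y 0 (j + c) := by
    intro k hk
    have e1 : S X 0 k = S X 0 (j + c) + S X (j + c) k := S_split X (by omega) hk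
    have e2 : S Y 0 k = S Y 0 (j + c) + S Y (j + c) k := S_split Y (by omega) hk
    have e3 : S X (j + c) k = S Y (j + c) k := by
      refine S_congr fun m hm1 hm2 => ?_
      have h := h3 (m - c) (by omega)
      rwa [Nat.sub_add_cancel (by omega)] at h
    omega
  -- bounds in the gap (j, i+c)
  have gapb : ∀ k, j < k → k < i + c →
      -1 ≤ S X 0 k - S Y 0 k ∧ S X 0 k - S Y 0 k ≤ a := by
    intro k hk1 hk2
    have e := fi k (by omega)
    have b1 : S X i k ≤ a := by rw [ha]; exact S_mono X (by omega) (by omega)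
    have b2 : 0 ≤ S X i k := S_nonneg X i k
    have b3 : S Y i k ≤ 1 := Wy i k (by omega)
    have b4 : 0 ≤ S Y i k := S_nonneg Y i k
    omega
  -- value at j + c
  have vjc := r2 j hij le_rfl
  have vjcb1 : 0 ≤ S Y j (j + c) := S_nonneg Y j (j + c)
  have vjcb2 : S Y j (j + c) ≤ 1 := Wy j (j + c) (by omega)
  rcases (by omega : a = 0 ∨ a = 1) with haz | hao
  · -- a = 0 : all differences in [-1, 0]
    right
    intro k
    rcases le_or_gt k i with hk | hk
    · have := f0 k hk; omega
    rcases le_or_gt k j with hkj | hkj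
    · have e := r1 k (by omega) hkj
      have b1 : 0 ≤ S X k (k + c) := S_nonneg X k (k + c)
      have b2 : S X k (k + c) ≤ 1 := Wx k (k + c) (by omega)
      omega
    rcases lt_or_ge k (i + c) with hk2 | hk2
    · have := gapb k hkj hk2; omega
    rcases le_or_gt k (j + c) with hk3 | hk3
    · obtain ⟨m, rfl⟩ : ∃ m, k = m + c := ⟨k - c, by omega⟩
      have e := r2 m (by omega) (by omega)
      have b1 : 0 ≤ S Y m (m + c) := S_nonneg Y m (m + c)
      have b2 : S Y m (m + c) ≤ 1 := Wy m (m + c) (by omega)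
      omega
    · have e := r3 k (by omega)
      omega
  · -- a = 1
    by_cases hgap : ∃ k, j < k ∧ k < i + c ∧ S X 0 k - S Y 0 k ≤ -1
    · -- a bad gap point exists: all differences in [-1, 0]
      right
      obtain ⟨k₀, hk₀1, hk₀2, hk₀3⟩ := hgap
      have hik₀ : i ≤ k₀ := by omega
      have e₀ := fi k₀ hik₀
      have bx1 : S X i k₀ ≤ a := by rw [ha]; exact S_mono X (by omega) (by omega)
      have bx0 : 0 ≤ S X i k₀ := S_nonneg X i k₀
      have by1 : S Y i k₀ ≤ 1 := Wy i k₀ (by omega)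
      have by0 : 0 ≤ S Y i k₀ := S_nonneg Y i k₀
      have hSx0 : S X i k₀ = 0 := by omega
      have hSy1 : S Y i k₀ = 1 := by omega
      -- the one of X sits in [k₀, i+c)
      have hsplit : S X i (i + c) = S X i k₀ + S X k₀ (i + c) :=
        S_split X (by omega) (by omega)
      obtain ⟨p, hp1, hp2, hp3⟩ : ∃ p, k₀ ≤ p ∧ p < i + c ∧ 1 ≤ X p :=
        S_pos_elim (by omega)
      -- the one of Y sits in [i, k₀)
      obtain ⟨q, hq1, hq2, hq3⟩ : ∃ q, i ≤ q ∧ q < k₀ ∧ 1 ≤ Y q :=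
        S_pos_elim (by omega)
      -- in fact q ≥ j
      have hqj : j ≤ q := by
        by_contra hcon
        push_neg at hcon
        have hXq : 1 ≤ X (q + c) := by rw [h2 q hq1 hcon]; exact hq3
        have hpair := S_pair_le (X := X) (k := p) (l := q + c + 1)
          (p := p) (q := q + c) (by omega) le_rfl (by omega)
        have hw := Wx p (q + c + 1) (by omega)
        have c1 : (1 : ℤ) ≤ X p := by exact_mod_cast hp3
        have c2 : (1 : ℤ) ≤ X (q + c) := by exact_mod_cast hXq
        omega
      intro k
      rcases le_or_gt k i with hk | hk
      · have := f0 k hk; omega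
      rcases le_or_gt k j with hkj | hkj
      · have e := r1 k (by omega) hkj
        have b1 : (X p : ℤ) ≤ S X k (k + c) := S_single_le (by omega) (by omega)
        have b2 : S X k (k + c) ≤ 1 := Wx k (k + c) (by omega)
        have c1 : (1 : ℤ) ≤ X p := by exact_mod_cast hp3
        omega
      rcases lt_or_ge k (i + c) with hk2 | hk2
      · -- gap
        have e := fi k (by omega)
        have b0 : 0 ≤ S X i k := S_nonneg X i k
        have b3 : S Y i k ≤ 1 := Wy i k (by omega)
        have b4 : 0 ≤ S Y i k := S_nonneg Y i k
        rcases le_or_gt k k₀ with hkk | hkk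
        · have b5 : S X i k ≤ S X i k₀ := S_mono X (by omega) hkk
          omega
        · have b6 : S Y i k₀ ≤ S Y i k := S_mono Y hik₀ (by omega)
          have b7 : S X i k ≤ a := by rw [ha]; exact S_mono X (by omega) (by omega)
          omega
      rcases le_or_gt k (j + c) with hk3 | hk3
      · obtain ⟨m, rfl⟩ : ∃ m, k = m + c := ⟨k - c, by omega⟩
        have e := r2 m (by omega) (by omega)
        have b1 : (Y q : ℤ) ≤ S Y m (m + c) := S_single_le (by omega) (by omega)
        have c1 : (1 : ℤ) ≤ Y q := by exact_mod_cast hq3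
        have b2 : S Y m (m + c) ≤ 1 := Wy m (m + c) (by omega)
        omega
      · have e := r3 k (by omega)
        have b1 : (Y q : ℤ) ≤ S Y j (j + c) := S_single_le (by omega) (by omega)
        have c1 : (1 : ℤ) ≤ Y q := by exact_mod_cast hq3
        omega
    · -- no bad gap point: all differences in [0, 1]
      left
      push_neg at hgap
      intro k
      rcases le_or_gt k i with hk | hk
      · have := f0 k hk; omega
      rcases le_or_gt k j with hkj | hkj
      · have e := r1 k (by omega) hkj
        have b1 : 0 ≤ S X k (k + c) := S_nonneg X k (k + c)
        have b2 : S X k (k + c) ≤ 1 := Wx k (k + c) (by omega)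
        omega
      rcases lt_or_ge k (i + c) with hk2 | hk2
      · have := gapb k hkj hk2
        have := hgap k hkj hk2
        omega
      rcases le_or_gt k (j + c) with hk3 | hk3
      · obtain ⟨m, rfl⟩ : ∃ m, k = m + c := ⟨k - c, by omega⟩
        have e := r2 m (by omega) (by omega)
        have b1 : 0 ≤ S Y m (m + c) := S_nonneg Y m (m + c)
        have b2 : S Y m (m + c) ≤ 1 := Wy m (m + c) (by omega)
        omega
      · have e := r3 k (by omega)
        omega

lemma getD_le_one {x : List ℕ} (hx2 : ∀ a ∈ x, a < 2) (m : ℕ) : x.getD m 0 ≤ 1 := by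
  rcases lt_or_ge m x.length with h | h
  · rw [List.getD_eq_getElem x 0 h]
    have := hx2 _ (x.getElem_mem h)
    omega
  · rw [List.getD_eq_default x 0 h]; omega

lemma window_of_tGood {t : ℕ} (ht : 1 ≤ t) {x : List ℕ} (hx2 : ∀ a ∈ x, a < 2)
    (hxg : tGood t x) (k l : ℕ) (hl : l ≤ k + t) :
    S (fun m => x.getD m 0) k l ≤ 1 := by
  have hle : ∀ m, x.getD m 0 ≤ 1 := getD_le_one hx2
  have key : (∑ m ∈ Finset.Ico k l, x.getD m 0) ≤ 1 := by
    by_contra hc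
    push_neg at hc
    have hcard : 1 < ((Finset.Ico k l).filter (fun m => x.getD m 0 = 1)).card := by
      have h1 : (∑ m ∈ Finset.Ico k l, x.getD m 0)
          ≤ ∑ m ∈ Finset.Ico k l, (if x.getD m 0 = 1 then 1 else 0) := by
        refine Finset.sum_le_sum fun m _ => ?_
        have := hle m
        split_ifs with h <;> omega
      rw [Finset.sum_boole] at h1
      simp only [Nat.cast_id] at h1
      omega
    obtain ⟨a, ha, b, hb, hab⟩ := Finset.one_lt_card.mp hcard
    rw [Finset.mem_filter, Finset.mem_Ico] at ha hb
    rcases lt_or_gt_of_ne hab with hlt | hlt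
    · have hblen : b < x.length := by
        by_contra h
        push_neg at h
        have := List.getD_eq_default x 0 h
        omega
      have h5 : t ≤ b - a := hxg a b hlt hblen ha.2 hb.2
      omega
    · have halen : a < x.length := by
        by_contra h
        push_neg at h
        have := List.getD_eq_default x 0 h
        omega
      have h5 : t ≤ a - b := hxg b a hlt halen hb.2 ha.2
      omega
  have : S (fun m => x.getD m 0) k l = ((∑ m ∈ Finset.Ico k l, x.getD m 0 : ℕ) : ℤ) := by
    unfold S
    rw [Nat.cast_sum]
  rw [this]
  exact_mod_cast key

lemma burst_getD (x : List ℕ) (i t' : ℕ) :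
    ∃ i₀ c, i₀ ≤ x.length ∧ i₀ + c ≤ x.length ∧ c ≤ t' ∧
      (x.take i ++ x.drop (i + t')).length + c = x.length ∧
      ∀ p, (x.take i ++ x.drop (i + t')).getD p 0 =
        if p < i₀ then x.getD p 0 else x.getD (p + c) 0 := by
  rcases le_or_gt i x.length with hi | hi
  · rcases le_or_gt (i + t') x.length with hit | hit
    · refine ⟨i, t', hi, hit, le_refl _, ?_, ?_⟩
      · simp only [List.length_append, List.length_take, List.length_drop]; omega
      · intro p
        rw [List.getD_eq_getElem?_getD, List.getElem?_append]
        rw [List.length_take]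
        rcases lt_or_ge p i with hp | hp
        · rw [if_pos (by omega), if_pos hp, List.getElem?_take, if_pos hp,
            List.getD_eq_getElem?_getD]
        · rw [if_neg (by omega), if_neg (by omega), List.getElem?_drop,
            List.getD_eq_getElem?_getD]
          congr 2
          omega
    · refine ⟨i, x.length - i, hi, by omega, by omega, ?_, ?_⟩
      · rw [List.drop_eq_nil_of_le (by omega)]
        simp only [List.append_nil, List.length_take]; omega
      · intro p
        rw [List.drop_eq_nil_of_le (by omega), List.append_nil]
        rcases lt_or_ge p i with hp | hp
        · rw [if_pos hp, List.getD_eq_getElem?_getD, List.getElem?_take, if_pos hp,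
            List.getD_eq_getElem?_getD]
        · rw [if_neg (by omega),
            List.getD_eq_default _ _ (by rw [List.length_take]; omega),
            List.getD_eq_default _ _ (by omega)]
  · refine ⟨x.length, 0, le_refl _, by omega, by omega, ?_, ?_⟩
    · rw [List.take_of_length_le (by omega), List.drop_eq_nil_of_le (by omega)]
      simp
    · intro p
      rw [List.take_of_length_le (by omega), List.drop_eq_nil_of_le (by omega),
        List.append_nil]
      split <;> simp


lemma facc_getD (x : List ℕ) (i : ℕ) (h1 : 1 ≤ i) (h2 : i ≤ x.length) :
    (facc x).getD (i - 1) 0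
      = S (fun m => x.getD m 0) 0 i := by
  unfold facc
  have hlen : i - 1 < ((List.range x.length).map
      (fun i => ∑ j ∈ Finset.range (i + 1), (x.getD j 0 : ℤ))).length := by
    simp only [List.length_map, List.length_range]; omega
  rw [List.getD_eq_getElem _ _ hlen, List.getElem_map, List.getElem_range]
  unfold S
  rw [← Finset.range_eq_Ico]
  have h3 : i - 1 + 1 = i := by omega
  rw [h3]

end Stmt16Aux

/-- Lemma 13. If `x, y ∈ Σ_2^n` are distinct `t`-good sequences whose
`≤t`-burst-deletion balls intersect, then the entrywise differences of their accumulative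
sequences all lie in `{0, 1}` or all lie in `{-1, 0}`. -/
theorem stmt16 (n t : ℕ) (ht : 1 ≤ t) (x y : List ℕ)
    (hxn : x.length = n) (hyn : y.length = n)
    (hx2 : ∀ a ∈ x, a < 2) (hy2 : ∀ a ∈ y, a < 2)
    (hxg : tGood t x) (hyg : tGood t y) (hne : x ≠ y)
    (hD : (burstBall t x ∩ burstBall t y).Nonempty) :
    (∀ i ∈ Finset.Icc 1 n,
      (facc x).getD (i - 1) 0 - (facc y).getD (i - 1) 0 ∈ ({0, 1} : Set ℤ)) ∨
    (∀ i ∈ Finset.Icc 1 n,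
      (facc x).getD (i - 1) 0 - (facc y).getD (i - 1) 0 ∈ ({-1, 0} : Set ℤ)) := by
    classical
  obtain ⟨z, ⟨hzx, hzy⟩⟩ := hD
  obtain ⟨i, t', ht', hz1⟩ := hzx
  obtain ⟨j, s', hs', hz2⟩ := hzy
  set X : ℕ → ℕ := fun m => x.getD m 0 with hXdef
  set Y : ℕ → ℕ := fun m => y.getD m 0 with hYdef
  obtain ⟨i₀, cx, hi₀n, hicn, hcxt', hlenx, FX0⟩ := Stmt16Aux.burst_getD x i t'
  obtain ⟨j₀, cy, hj₀n, hjcn, hcys', hleny, FY0⟩ := Stmt16Aux.burst_getD y j s'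
  rw [← hz1] at hlenx FX0
  rw [← hz2] at hleny FY0
  rw [hxn] at hlenx hi₀n hicn
  rw [hyn] at hleny hj₀n hjcn
  have hcc : cx = cy := by omega
  subst hcc
  set c := cx with hcdef
  -- c = 0 is impossible since x ≠ y
  rcases Nat.eq_zero_or_pos c with hc0 | hcpos
  · exfalso
    apply hne
    refine List.ext_getElem (by omega) fun p hp1 hp2 => ?_
    have e1 := FX0 p
    have e2 := FY0 p
    rw [hc0] at e1 e2
    simp only [Nat.add_zero] at e1 e2
    rw [← List.getD_eq_getElem x 0 hp1, ← List.getD_eq_getElem y 0 hp2]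
    have e1' : z.getD p 0 = x.getD p 0 := by rw [e1]; split <;> rfl
    have e2' : z.getD p 0 = y.getD p 0 := by rw [e2]; split <;> rfl
    rw [← e1', e2']
  -- window properties
  have Wx : ∀ k l, l ≤ k + t → Stmt16Aux.S X k l ≤ 1 := fun k l hl =>
    Stmt16Aux.window_of_tGood ht hx2 hxg k l hl
  have Wy : ∀ k l, l ≤ k + t → Stmt16Aux.S Y k l ≤ 1 := fun k l hl =>
    Stmt16Aux.window_of_tGood ht hy2 hyg k l hl
  have hct : c ≤ t := by omega
  -- the key dichotomy, in terms of partial sums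
  have key : (∀ k, 0 ≤ Stmt16Aux.S X 0 k - Stmt16Aux.S Y 0 k ∧
        Stmt16Aux.S X 0 k - Stmt16Aux.S Y 0 k ≤ 1) ∨
      (∀ k, -1 ≤ Stmt16Aux.S X 0 k - Stmt16Aux.S Y 0 k ∧
        Stmt16Aux.S X 0 k - Stmt16Aux.S Y 0 k ≤ 0) := by
    rcases le_total i₀ j₀ with hij | hij
    · refine Stmt16Aux.core t c i₀ j₀ X Y hcpos hct hij Wx Wy ?_ ?_ ?_
      · intro m hm
        show x.getD m 0 = y.getD m 0
        have e1 := FX0 m; have e2 := FY0 m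
        rw [if_pos hm] at e1
        rw [if_pos (by omega)] at e2
        rw [← e1, e2]
      · intro m hm1 hm2
        show x.getD (m + c) 0 = y.getD m 0
        have e1 := FX0 m; have e2 := FY0 m
        rw [if_neg (by omega)] at e1
        rw [if_pos hm2] at e2
        rw [← e1, e2]
      · intro m hm
        show x.getD (m + c) 0 = y.getD (m + c) 0
        have e1 := FX0 m; have e2 := FY0 m
        rw [if_neg (by omega)] at e1
        rw [if_neg (by omega)] at e2
        rw [← e1, e2]
    · have key' := Stmt16Aux.core t c j₀ i₀ Y X hcpos hct hij Wy Wx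
        (fun m hm => by
          show y.getD m 0 = x.getD m 0
          have e1 := FX0 m; have e2 := FY0 m
          rw [if_pos (by omega)] at e1
          rw [if_pos hm] at e2
          rw [← e2, e1])
        (fun m hm1 hm2 => by
          show y.getD (m + c) 0 = x.getD m 0
          have e1 := FX0 m; have e2 := FY0 m
          rw [if_pos hm2] at e1
          rw [if_neg (by omega)] at e2
          rw [← e2, e1])
        (fun m hm => by
          show y.getD (m + c) 0 = x.getD (m + c) 0
          have e1 := FX0 m; have e2 := FY0 m
          rw [if_neg (by omega)] at e1
          rw [if_neg (by omega)] at e2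
          rw [← e2, e1])
      rcases key' with h | h
      · right; intro k; have := h k; omega
      · left; intro k; have := h k; omega
  -- translate to accumulative sequences
  have hfx : ∀ i ∈ Finset.Icc 1 n, (facc x).getD (i - 1) 0 = Stmt16Aux.S X 0 i := by
    intro i hi
    rw [Finset.mem_Icc] at hi
    exact Stmt16Aux.facc_getD x i hi.1 (by omega)
  have hfy : ∀ i ∈ Finset.Icc 1 n, (facc y).getD (i - 1) 0 = Stmt16Aux.S Y 0 i := by
    intro i hi
    rw [Finset.mem_Icc] at hi
    exact Stmt16Aux.facc_getD y i hi.1 (by omega)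
  rcases key with h | h
  · left
    intro i hi
    rw [hfx i hi, hfy i hi]
    have := h i
    simp only [Set.mem_insert_iff, Set.mem_singleton_iff]
    omega
  · right
    intro i hi
    rw [hfx i hi, hfy i hi]
    have := h i
    simp only [Set.mem_insert_iff, Set.mem_singleton_iff]
    omega
end
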